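/- arXiv:1604.03788 — 7 statements merged into one kernel-verified Lean document; each statement's English description precedes it below -/
import Mathlib

section
/- Let G be a group, let A and B be subgroups of G with an isomorphism φ : A ≃ B, and let H = G*_φ be the HNN extension of G along φ with stable letter t, with canonical homomorphism ι : G → H. Then the normal subgroup of H generated by the torsion elements of H equals the normal closure in H of ι(tor₁(G)), which in turn equals the normal closure in H of the image under ι of the set of torsion elements of G. In symbols: tor₁(G*_φ) = ⟪ι(tor₁(G))⟫^{G*_φ} = ⟪ι(tor(G))⟫^{G*_φ}. -/
/-!
A torsion element of an HNN extension is conjugate into the base group. Write it as a reduced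
word and rotate it: whenever the last letter `t ^ u * a` and the first letter `t ^ (-u) * g`
form a pinch, conjugating by `t ^ u * a` shortens the word. Otherwise every power of the word is
again a reduced word of growing length, so by Britton's lemma no power is trivial. Since `ι` is
injective, `tor(G*_φ)` therefore consists of conjugates of `ι(tor G)`, and normally generating
`ι(tor₁ G)` or `ι(tor G)` gives the same subgroup.
-/

/-- `torOne G` is the normal subgroup of `G` generated by the torsion elements. -/
def torOne (G : Type*) [Group G] : Subgroup G :=
  Subgroup.normalClosure {g : G | IsOfFinOrder g}

instance torOne_normal (G : Type*) [Group G] : (torOne G).Normal :=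
  Subgroup.normalClosure_normal

open Subgroup in
theorem Subgroup.normalClosure_image_normalClosure {G H : Type*} [Group G] [Group H]
    (f : G →* H) (s : Set G) :
    normalClosure (f '' normalClosure s) = normalClosure (f '' s) :=
  le_antisymm (normalClosure_le_normal (Set.image_subset_iff.2 (comap_normalClosure_image_ge s f)))
    (normalClosure_mono (Set.image_mono subset_normalClosure))

open Subgroup in
theorem torOne_eq_normalClosure_image {G H : Type*} [Group G] [Group H] {f : G →* H}
    (hf : Function.Injective f) (hconj : ∀ x : H, IsOfFinOrder x → ∃ g, IsConj x (f g)) :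
    torOne H = normalClosure (f '' {g | IsOfFinOrder g}) := by
  refine le_antisymm (normalClosure_le_normal fun x hx => ?_) (normalClosure_le_normal ?_)
  · obtain ⟨g, hg⟩ := hconj x hx
    obtain ⟨c, rfl⟩ := isConj_iff.1 hg.symm
    have hgN : f g ∈ normalClosure (f '' {g | IsOfFinOrder g}) :=
      subset_normalClosure ⟨g, hf.isOfFinOrder_iff.1 (hg.isOfFinOrder hx), rfl⟩
    exact normalClosure_normal.conj_mem _ hgN c
  · rintro _ ⟨g, hg, rfl⟩
    exact subset_normalClosure (f.isOfFinOrder hg)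

namespace HNNExtension

open NormalWord

variable {G : Type*} [Group G] {A B : Subgroup G} (φ : A ≃* B)

theorem of_toSubgroupEquiv_eq_conj (u : ℤˣ) (a : toSubgroup A B u) :
    (of (toSubgroupEquiv φ u a : G) : HNNExtension G A B φ) =
      t ^ (u : ℤ) * of (a : G) * (t ^ (u : ℤ))⁻¹ := by
  rcases Int.units_eq_one_or u with rfl | rfl
  · exact equiv_eq_conj a
  · simp only [Units.val_neg, Units.val_one, zpow_neg, zpow_one, inv_inv]
    exact equiv_symm_eq_conj a

variable (A B) in
/-- The relation in `ReducedWord.chain`: with `(u, g)` standing for the letter `t ^ u * g`,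
consecutive letters do not form a pinch `t ^ u * g * t ^ (-u)` with `g ∈ toSubgroup A B u`. -/
abbrev NoPinch (a b : ℤˣ × G) : Prop :=
  a.2 ∈ toSubgroup A B a.1 → a.1 = b.1

def letterProd (L : List (ℤˣ × G)) : HNNExtension G A B φ :=
  (L.map fun x => t ^ (x.1 : ℤ) * of x.2).prod

@[simp]
theorem letterProd_nil : letterProd φ ([] : List (ℤˣ × G)) = 1 := rfl

@[simp]
theorem letterProd_cons (x : ℤˣ × G) (L : List (ℤˣ × G)) :
    letterProd φ (x :: L) = t ^ (x.1 : ℤ) * of x.2 * letterProd φ L := by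
  simp [letterProd]

@[simp]
theorem letterProd_append (L M : List (ℤˣ × G)) :
    letterProd φ (L ++ M) = letterProd φ L * letterProd φ M := by
  simp [letterProd]

theorem ReducedWord.prod_eq_of_mul_letterProd (w : ReducedWord G A B) :
    w.prod φ = of w.head * letterProd φ w.toList := rfl

theorem letterProd_flatten_replicate (n : ℕ) (L : List (ℤˣ × G)) :
    letterProd φ (List.replicate n L).flatten = letterProd φ L ^ n := by
  simp [letterProd, List.prod_flatten, List.map_flatten]

theorem isChain_noPinch_append_singleton {Y : List (ℤˣ × G)} {u : ℤˣ} {g : G}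
    (h : (Y ++ [(u, g)]).IsChain (NoPinch A B)) (g' : G) :
    (Y ++ [(u, g')]).IsChain (NoPinch A B) := by
  rw [List.isChain_append] at h ⊢
  refine ⟨h.1, List.isChain_singleton _, fun x hx y hy => ?_⟩
  obtain rfl : y = (u, g') := by simpa using hy.symm
  exact h.2.2 x hx (u, g) rfl

theorem not_isOfFinOrder_letterProd {L : List (ℤˣ × G)} (hL : L ≠ [])
    (hchain : L.IsChain (NoPinch A B))
    (hcyc : ∀ x ∈ L.getLast?, ∀ y ∈ L.head?, NoPinch A B x y) :
    ¬IsOfFinOrder (letterProd φ L) := by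
  intro hfin
  obtain ⟨n, hn, hpow⟩ := isOfFinOrder_iff_pow_eq_one.1 hfin
  have hchain_pow : ((List.replicate n L).flatten).IsChain (NoPinch A B) := by
    rw [List.isChain_flatten (by simp [hL.symm])]
    exact ⟨by simp [hchain], List.isChain_replicate_of_rel n hcyc⟩
  let w : ReducedWord G A B := ⟨1, (List.replicate n L).flatten, hchain_pow⟩
  have hw : w.prod φ ∈ (of : G →* HNNExtension G A B φ).range := ⟨1, by
    rw [ReducedWord.prod_eq_of_mul_letterProd, letterProd_flatten_replicate, hpow]; simp [w]⟩
  have := congrArg List.length (ReducedWord.toList_eq_nil_of_mem_of_range φ w hw)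
  simp [w, hn.ne', hL] at this

theorem isConj_letterProd_of_pinch (u : ℤˣ) (g : G) (T : List (ℤˣ × G))
    (a : toSubgroup A B u) :
    IsConj (letterProd φ ((-u, g) :: T ++ [(u, (a : G))]))
      (letterProd φ T * of (toSubgroupEquiv φ u a * g)) := by
  have hpinch : IsConj (letterProd φ ((-u, g) :: T ++ [(u, (a : G))]))
      (of (toSubgroupEquiv φ u a * g) * letterProd φ T) := isConj_iff.2
    ⟨t ^ (u : ℤ) * of (a : G), by
      simp only [letterProd_append, letterProd_cons, letterProd_nil, List.cons_append, map_mul,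
        of_toSubgroupEquiv_eq_conj, Units.val_neg, zpow_neg]
      group⟩
  exact hpinch.trans (isConj_iff.2 ⟨(of (toSubgroupEquiv φ u a * g))⁻¹, by group⟩)

theorem exists_isConj_of_of_isOfFinOrder_letterProd_mul {L : List (ℤˣ × G)}
    (hchain : L.IsChain (NoPinch A B)) (c : G) (hfin : IsOfFinOrder (letterProd φ L * of c)) :
    ∃ g : G, IsConj (letterProd φ L * of c) (of g) := by
  induction hlen : L.length using Nat.strong_induction_on generalizing L c with
  | _ n ih =>
    obtain rfl | ⟨Y, ⟨u, g⟩, rfl⟩ := L.eq_nil_or_concat'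
    · exact ⟨c, by rw [letterProd_nil, one_mul]⟩
    have hM : letterProd φ (Y ++ [(u, g)]) * of c = letterProd φ (Y ++ [(u, g * c)]) := by
      simp [mul_assoc]
    rw [hM] at hfin ⊢
    have hchainM := isChain_noPinch_append_singleton hchain (g * c)
    by_cases hcyc : ∀ x ∈ (Y ++ [(u, g * c)]).getLast?, ∀ y ∈ (Y ++ [(u, g * c)]).head?,
        NoPinch A B x y
    · exact absurd hfin (not_isOfFinOrder_letterProd φ (by simp) hchainM hcyc)
    obtain ⟨u₁, g₁, T, rfl, hmem, hne⟩ : ∃ u₁ g₁ T, Y = (u₁, g₁) :: T ∧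
        g * c ∈ toSubgroup A B u ∧ u ≠ u₁ := by
      rcases Y with _ | ⟨⟨u₁, g₁⟩, T⟩
      · simp at hcyc
      · rw [List.getLast?_concat] at hcyc
        simpa [NoPinch] using hcyc
    obtain rfl : u₁ = -u := Int.units_ne_iff_eq_neg.1 hne.symm
    have hconj := isConj_letterProd_of_pinch φ u g₁ T ⟨g * c, hmem⟩
    obtain ⟨g', hg'⟩ := ih T.length (by simp [← hlen]) hchain.tail.left_of_append _
      (hconj.isOfFinOrder hfin) rfl
    exact ⟨g', hconj.trans hg'⟩

theorem exists_isConj_of_of_isOfFinOrder {x : HNNExtension G A B φ} (hx : IsOfFinOrder x) :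
    ∃ g : G, IsConj x (of g) := by
  obtain ⟨w, rfl⟩ : ∃ w : ReducedWord G A B, w.prod φ = x :=
    let d := (TransversalPair.nonempty G A B).some
    ⟨(NormalWord.equiv φ d x).toReducedWord, (NormalWord.equiv φ d).symm_apply_apply x⟩
  have hrot : IsConj (w.prod φ) (letterProd φ w.toList * of w.head) :=
    isConj_iff.2 ⟨(of w.head)⁻¹, by rw [ReducedWord.prod_eq_of_mul_letterProd]; group⟩
  obtain ⟨g, hg⟩ :=
    exists_isConj_of_of_isOfFinOrder_letterProd_mul φ w.chain w.head (hrot.isOfFinOrder hx)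
  exact ⟨g, hrot.trans hg⟩

end HNNExtension

/-- Lemma (torsion of an HNN extension): for an HNN extension `H = G*_φ` with canonical
map `ι = HNNExtension.of`, we have
`tor₁(H) = ⟪ι(tor₁ G)⟫^H = ⟪ι(tor G)⟫^H`. -/
theorem tor_one_hnnExtension {G : Type*} [Group G] (A B : Subgroup G) (φ : A ≃* B) :
    torOne (HNNExtension G A B φ) =
      Subgroup.normalClosure
        ((HNNExtension.of : G →* HNNExtension G A B φ) '' (torOne G : Set G)) ∧
    torOne (HNNExtension G A B φ) =
      Subgroup.normalClosure
        ((HNNExtension.of : G →* HNNExtension G A B φ) '' {g : G | IsOfFinOrder g}) := by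
  have htor := torOne_eq_normalClosure_image (HNNExtension.of_injective (φ := φ))
    (fun _ => HNNExtension.exists_isConj_of_of_isOfFinOrder φ)
  exact ⟨htor.trans (Subgroup.normalClosure_image_normalClosure _ _).symm, htor⟩
end

section
/- Let G be a group, let A₁,…,Aₙ and B₁,…,Bₙ be subgroups of G with isomorphisms φᵢ : Aᵢ ≃ Bᵢ for 1 ≤ i ≤ n, let H = G*_{φ₁,…,φₙ} be the HNN extension with stable letters t₁,…,tₙ, and let ι : G → H be the canonical homomorphism. Let K be a normal subgroup of G. Then K is a good subgroup of G with respect to H (i.e., φᵢ(K ∩ Aᵢ) = K ∩ Bᵢ for all 1 ≤ i ≤ n) if and only if the preimage under ι of the normal closure in H of ι(K) equals K. -/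
/-- The relations `tᵢ⁻¹ a tᵢ φᵢ(a)⁻¹` defining an HNN extension with several stable letters. -/
def MultiHNNRels {G : Type*} [Group G] {ι : Type*} (A B : ι → Subgroup G)
    (φ : ∀ i, A i ≃* B i) : Set (Monoid.Coprod G (FreeGroup ι)) :=
  ⋃ i, Set.range fun a : A i =>
    (Monoid.Coprod.inr (FreeGroup.of i) : Monoid.Coprod G (FreeGroup ι))⁻¹ *
      Monoid.Coprod.inl (a : G) * Monoid.Coprod.inr (FreeGroup.of i) *
      (Monoid.Coprod.inl ((φ i a : G)) : Monoid.Coprod G (FreeGroup ι))⁻¹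

/-- The HNN extension `G*_{φ₁,…,φₙ}` of `G` along the isomorphisms `φᵢ : Aᵢ ≃ Bᵢ`,
with one stable letter `tᵢ` for each index `i`. -/
def MultiHNN {G : Type*} [Group G] {ι : Type*} (A B : ι → Subgroup G)
    (φ : ∀ i, A i ≃* B i) : Type _ :=
  Monoid.Coprod G (FreeGroup ι) ⧸ Subgroup.normalClosure (MultiHNNRels A B φ)

instance {G : Type*} [Group G] {ι : Type*} (A B : ι → Subgroup G)
    (φ : ∀ i, A i ≃* B i) : Group (MultiHNN A B φ) :=
  inferInstanceAs (Group (Monoid.Coprod G (FreeGroup ι) ⧸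
    Subgroup.normalClosure (MultiHNNRels A B φ)))

/-- The canonical homomorphism `ι : G → G*_{φ₁,…,φₙ}`. -/
def MultiHNN.of {G : Type*} [Group G] {ι : Type*} (A B : ι → Subgroup G)
    (φ : ∀ i, A i ≃* B i) : G →* MultiHNN A B φ :=
  (QuotientGroup.mk' (Subgroup.normalClosure (MultiHNNRels A B φ))).comp Monoid.Coprod.inl

/-- The stable letter `tᵢ` of the HNN extension `G*_{φ₁,…,φₙ}`. -/
def MultiHNN.t {G : Type*} [Group G] {ι : Type*} (A B : ι → Subgroup G)
    (φ : ∀ i, A i ≃* B i) (i : ι) : MultiHNN A B φ :=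
  QuotientGroup.mk' (Subgroup.normalClosure (MultiHNNRels A B φ))
    (Monoid.Coprod.inr (FreeGroup.of i))

/-- The fundamental relation `tᵢ⁻¹ ι(a) tᵢ = ι(φᵢ a)` in the multi HNN extension. -/
lemma MultiHNN.t_inv_mul_of_mul_t {G : Type*} [Group G] {ι : Type*} (A B : ι → Subgroup G)
    (φ : ∀ i, A i ≃* B i) (i : ι) (a : A i) :
    (MultiHNN.t A B φ i)⁻¹ * MultiHNN.of A B φ a * MultiHNN.t A B φ i =
      MultiHNN.of A B φ (φ i a) := by
  have hmem : ((Monoid.Coprod.inr (FreeGroup.of i) : Monoid.Coprod G (FreeGroup ι))⁻¹ *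
      Monoid.Coprod.inl (a : G) * Monoid.Coprod.inr (FreeGroup.of i) *
      (Monoid.Coprod.inl ((φ i a : G)) : Monoid.Coprod G (FreeGroup ι))⁻¹) ∈
      Subgroup.normalClosure (MultiHNNRels A B φ) :=
    Subgroup.subset_normalClosure (Set.mem_iUnion.2 ⟨i, ⟨a, rfl⟩⟩)
  have h1 := (QuotientGroup.eq_one_iff _).2 hmem
  rw [QuotientGroup.mk_mul, QuotientGroup.mk_mul, QuotientGroup.mk_mul,
    QuotientGroup.mk_inv, QuotientGroup.mk_inv] at h1
  simp only [MultiHNN.of, MultiHNN.t, MonoidHom.comp_apply, QuotientGroup.mk'_apply]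
  exact mul_inv_eq_one.mp h1

/-- Transport an isomorphism of subgroups along a (not necessarily injective) homomorphism,
given compatibility with the kernel. -/
lemma exists_map_mulEquiv {G P : Type*} [Group G] [Group P] (f : G →* P)
    (A B : Subgroup G) (φ : A ≃* B)
    (h : Subgroup.map (B.subtype.comp φ.toMonoidHom) (f.ker.comap A.subtype) = f.ker ⊓ B) :
    ∃ ψ : A.map f ≃* B.map f, ∀ a : A,
      (ψ ⟨f a, Subgroup.mem_map_of_mem f a.2⟩ : P) = f (φ a) := by
  set fA := f.comp A.subtype with hfA
  set fB := f.comp B.subtype with hfB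
  have hkA : fA.ker = f.ker.comap A.subtype := (MonoidHom.comap_ker f A.subtype)
  have hkB : fB.ker = f.ker.comap B.subtype := (MonoidHom.comap_ker f B.subtype)
  have he : fA.ker.map (φ : A →* B) = fB.ker := by
    apply Subgroup.map_injective B.subtype_injective
    rw [Subgroup.map_map, hkA, hkB, Subgroup.map_comap_eq, Subgroup.range_subtype,
      inf_comm]
    exact h
  have hrA : fA.range = A.map f := by
    rw [hfA, MonoidHom.range_comp, Subgroup.range_subtype]
  have hrB : fB.range = B.map f := by
    rw [hfB, MonoidHom.range_comp, Subgroup.range_subtype]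
  refine ⟨(MulEquiv.subgroupCongr hrA.symm).trans
    ((QuotientGroup.quotientKerEquivRange fA).symm.trans
      ((QuotientGroup.congr fA.ker fB.ker φ he).trans
        ((QuotientGroup.quotientKerEquivRange fB).trans (MulEquiv.subgroupCongr hrB)))), ?_⟩
  intro a
  have h1 : (MulEquiv.subgroupCongr hrA.symm) ⟨f a, Subgroup.mem_map_of_mem f a.2⟩ =
      QuotientGroup.quotientKerEquivRange fA (QuotientGroup.mk a) := by
    apply Subtype.ext; rfl
  have h2 : (QuotientGroup.quotientKerEquivRange fA).symm
      ((MulEquiv.subgroupCongr hrA.symm) ⟨f a, Subgroup.mem_map_of_mem f a.2⟩) =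
      QuotientGroup.mk a := by
    rw [h1, MulEquiv.symm_apply_apply]
  simp only [MulEquiv.trans_apply, h2]
  have h3 : (QuotientGroup.congr fA.ker fB.ker φ he) (QuotientGroup.mk a) =
      QuotientGroup.mk (φ a) := rfl
  rw [h3]
  rfl

universe u

/-- The key existence lemma: given a good normal subgroup `K`, there is a group `P`,
a homomorphism `f : G →* P` with kernel exactly `K`, and elements `τᵢ` realizing
the HNN relations. Built from iterated (single stable letter) HNN extensions of `G ⧸ K`. -/
lemma exists_rep {G : Type u} [Group G] (n : ℕ) (A B : Fin n → Subgroup G)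
    (φ : ∀ i, A i ≃* B i) (K : Subgroup G) (hK : K.Normal)
    (hgood : ∀ i, Subgroup.map ((B i).subtype.comp (φ i).toMonoidHom)
        (K.comap (A i).subtype) = K ⊓ B i) :
    ∃ (P : Type u) (_ : Group P) (f : G →* P) (τ : Fin n → P),
      f.ker = K ∧ ∀ i (a : A i), (τ i)⁻¹ * f a * τ i = f (φ i a) := by
  induction n with
  | zero =>
    exact ⟨G ⧸ K, inferInstance, QuotientGroup.mk' K, fun i => i.elim0,
      QuotientGroup.ker_mk' K, fun i => i.elim0⟩
  | succ n ih =>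
    obtain ⟨P, hP, f, τ, hker, hrel⟩ := ih (fun j => A j.castSucc) (fun j => B j.castSucc)
      (fun j => φ j.castSucc) (fun j => hgood j.castSucc)
    letI := hP
    obtain ⟨ψ, hψ⟩ := exists_map_mulEquiv f (A (Fin.last n)) (B (Fin.last n)) (φ (Fin.last n))
      (by rw [hker]; exact hgood (Fin.last n))
    refine ⟨HNNExtension P ((B (Fin.last n)).map f) ((A (Fin.last n)).map f) ψ.symm,
      inferInstance, HNNExtension.of.comp f,
      Fin.lastCases HNNExtension.t (fun j => HNNExtension.of (τ j)), ?_, ?_⟩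
    · rw [← hker]
      ext x
      simp only [MonoidHom.mem_ker, MonoidHom.comp_apply]
      constructor
      · intro hx
        apply HNNExtension.of_injective (G := P) (A := (B (Fin.last n)).map f)
          (B := (A (Fin.last n)).map f) (φ := ψ.symm)
        rw [map_one]
        exact hx
      · intro hx
        rw [hx, map_one]
    · intro i a
      induction i using Fin.lastCases with
      | last =>
        simp only [Fin.lastCases_last, MonoidHom.comp_apply]
        have key := HNNExtension.equiv_symm_eq_conj (φ := ψ.symm)
          (⟨f a, Subgroup.mem_map_of_mem f a.2⟩ : (A (Fin.last n)).map f)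
        rw [MulEquiv.symm_symm] at key
        rw [hψ a] at key
        exact key.symm
      | cast j =>
        simp only [Fin.lastCases_castSucc, MonoidHom.comp_apply]
        rw [← map_inv, ← map_mul, ← map_mul, hrel j a]

/-- A normal subgroup `K ⊴ G` is a *good* subgroup with respect to the HNN extension
`H = G*_{φ₁,…,φₙ}` (i.e. `φᵢ(K ∩ Aᵢ) = K ∩ Bᵢ` for all `i`) if and only if the preimage
under `ι : G → H` of the normal closure of `ι(K)` in `H` is exactly `K`. -/
theorem good_iff_comap_normalClosure_eq {G : Type*} [Group G] {n : ℕ}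
    (A B : Fin n → Subgroup G) (φ : ∀ i, A i ≃* B i) (K : Subgroup G) (hK : K.Normal) :
    (∀ i, Subgroup.map ((B i).subtype.comp (φ i).toMonoidHom)
        (K.comap (A i).subtype) = K ⊓ B i) ↔
      (Subgroup.normalClosure ((MultiHNN.of A B φ) '' (K : Set G))).comap
          (MultiHNN.of A B φ) = K := by
  constructor
  · intro hgood
    apply le_antisymm
    · intro g hg
      obtain ⟨P, hP, f, τ, hker, hrel⟩ := exists_rep n A B φ K hK hgood
      letI := hP
      set L : Monoid.Coprod G (FreeGroup (Fin n)) →* P :=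
        Monoid.Coprod.lift f (FreeGroup.lift τ) with hL
      have hrels : Subgroup.normalClosure (MultiHNNRels A B φ) ≤ L.ker := by
        apply Subgroup.normalClosure_le_normal
        rintro x hx
        obtain ⟨i, a, rfl⟩ := by
          simpa only [MultiHNNRels, Set.mem_iUnion, Set.mem_range] using hx
        simp only [SetLike.mem_coe, MonoidHom.mem_ker, map_mul, map_inv, hL,
          Monoid.Coprod.lift_apply_inl, Monoid.Coprod.lift_apply_inr, FreeGroup.lift_apply_of]
        rw [hrel i a, mul_inv_cancel]
      set Φ : MultiHNN A B φ →* P := QuotientGroup.lift _ L hrels with hΦ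
      have hΦof : ∀ x : G, Φ (MultiHNN.of A B φ x) = f x := fun x => by
        show QuotientGroup.lift _ L hrels
          (((QuotientGroup.mk' _).comp Monoid.Coprod.inl) x) = f x
        rw [MonoidHom.comp_apply, QuotientGroup.mk'_apply, QuotientGroup.lift_mk, hL,
          Monoid.Coprod.lift_apply_inl]
      have hNker : Subgroup.normalClosure ((MultiHNN.of A B φ) '' (K : Set G)) ≤ Φ.ker := by
        apply Subgroup.normalClosure_le_normal
        rintro _ ⟨k, hk, rfl⟩
        simp only [SetLike.mem_coe, MonoidHom.mem_ker, hΦof]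
        rw [← hker] at hk
        exact hk
      have : Φ (MultiHNN.of A B φ g) = 1 := hNker hg
      rw [hΦof] at this
      rw [← hker]
      exact this
    · intro k hk
      exact Subgroup.subset_normalClosure ⟨k, hk, rfl⟩
  · intro h i
    have hrel := MultiHNN.t_inv_mul_of_mul_t A B φ
    apply le_antisymm
    · intro x hx
      obtain ⟨a, ha, rfl⟩ := Subgroup.mem_map.mp hx
      replace ha : (a : G) ∈ K := Subgroup.mem_comap.mp ha
      refine Subgroup.mem_inf.mpr ⟨?_, (φ i a).2⟩
      have haN : MultiHNN.of A B φ (a : G) ∈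
          Subgroup.normalClosure ((MultiHNN.of A B φ) '' (K : Set G)) := by
        rw [← h] at ha
        exact Subgroup.mem_comap.mp ha
      have : (MultiHNN.t A B φ i)⁻¹ * MultiHNN.of A B φ (a : G) * MultiHNN.t A B φ i ∈
          Subgroup.normalClosure ((MultiHNN.of A B φ) '' (K : Set G)) := by
        simpa using Subgroup.Normal.conj_mem inferInstance _ haN (MultiHNN.t A B φ i)⁻¹
      rw [hrel i a] at this
      rw [← h]
      exact this
    · intro b hb
      obtain ⟨hbK, hbB⟩ := Subgroup.mem_inf.mp hb
      rw [Subgroup.mem_map]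
      refine ⟨(φ i).symm ⟨b, hbB⟩, Subgroup.mem_comap.mpr ?_, by simp⟩
      have key := hrel i ((φ i).symm ⟨b, hbB⟩)
      rw [MulEquiv.apply_symm_apply] at key
      have hbN : MultiHNN.of A B φ b ∈
          Subgroup.normalClosure ((MultiHNN.of A B φ) '' (K : Set G)) :=
        Subgroup.subset_normalClosure ⟨b, hbK, rfl⟩
      have : MultiHNN.t A B φ i * MultiHNN.of A B φ b * (MultiHNN.t A B φ i)⁻¹ ∈
          Subgroup.normalClosure ((MultiHNN.of A B φ) '' (K : Set G)) :=
        Subgroup.Normal.conj_mem inferInstance _ hbN (MultiHNN.t A B φ i)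
      have heq : MultiHNN.of A B φ ((φ i).symm ⟨b, hbB⟩ : G) =
          MultiHNN.t A B φ i * MultiHNN.of A B φ b * (MultiHNN.t A B φ i)⁻¹ := by
        rw [← key]; group
      rw [← h]
      refine Subgroup.mem_comap.mpr ?_
      show MultiHNN.of A B φ (((φ i).symm ⟨b, hbB⟩ : A i) : G) ∈ _
      rw [heq]
      exact this
end

section
/- Let G be a group, let A₁,…,Aₙ and B₁,…,Bₙ be subgroups of G with isomorphisms φᵢ : Aᵢ ≃ Bᵢ for 1 ≤ i ≤ n, let H = G*_{φ₁,…,φₙ} be the HNN extension with stable letters t₁,…,tₙ, and let ι : G → H be the canonical homomorphism. Let K be a normal subgroup of G that is good with respect to H, let φ̄ᵢ : AᵢK/K ≃ BᵢK/K be the isomorphisms induced by the φᵢ on the images of Aᵢ and Bᵢ in G/K, let H_K = (G/K)*_{φ̄₁,…,φ̄ₙ} with stable letters t̄₁,…,t̄ₙ, and let φ_K : H → H_K be the surjective homomorphism determined by ι(g) ↦ gK for g ∈ G and tᵢ ↦ t̄ᵢ. Then the kernel of φ_K equals the normal closure in H of ι(K). -/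
/-!
Let `N` be the normal closure of `ι(K)` in `H`. Since `K ≤ ker (H → H/N) ∘ ι`, the map
`G → H/N` factors through `G/K`, and the defining relations of `H_K` hold for it together with
the images of the stable letters `tᵢ`. The resulting homomorphism `Θ : H_K → H/N` satisfies
`Θ ∘ Φ = (H → H/N)`, so `ker Φ ≤ N`; the reverse inclusion is clear since `Φ` kills `ι(K)`.
-/

namespace MultiHNN

variable {G : Type*} [Group G] {ι : Type*} {A B : ι → Subgroup G} {φ : ∀ i, A i ≃* B i}
  {M : Type*} [Group M]

theorem t_inv_mul_of_mul_t_s2 (i : ι) (a : A i) :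
    (t A B φ i)⁻¹ * of A B φ a * t A B φ i = of A B φ (φ i a) :=
  mul_inv_eq_one.1 <| (QuotientGroup.eq_one_iff _).2 <|
    Subgroup.subset_normalClosure (Set.mem_iUnion.2 ⟨i, a, rfl⟩)

def lift (f : G →* M) (s : ι → M) (h : ∀ i (a : A i), (s i)⁻¹ * f a * s i = f (φ i a)) :
    MultiHNN A B φ →* M :=
  QuotientGroup.lift _ (Monoid.Coprod.lift f (FreeGroup.lift s)) <|
    Subgroup.normalClosure_le_normal <| by
      rintro _ ⟨_, ⟨i, rfl⟩, a, rfl⟩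
      simp [h]

@[simp]
theorem lift_of (f : G →* M) (s : ι → M) (h : ∀ i (a : A i), (s i)⁻¹ * f a * s i = f (φ i a))
    (g : G) : lift f s h (of A B φ g) = f g :=
  rfl

@[simp]
theorem lift_t (f : G →* M) (s : ι → M) (h : ∀ i (a : A i), (s i)⁻¹ * f a * s i = f (φ i a))
    (i : ι) : lift f s h (t A B φ i) = s i :=
  FreeGroup.lift_apply_of

@[ext]
theorem hom_ext {f g : MultiHNN A B φ →* M} (hof : f.comp (of A B φ) = g.comp (of A B φ))
    (ht : ∀ i, f (t A B φ i) = g (t A B φ i)) : f = g :=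
  QuotientGroup.monoidHom_ext _ (Monoid.Coprod.hom_ext hof (FreeGroup.ext_hom _ _ ht))

end MultiHNN

theorem MonoidHom.ker_eq_of_comp_eq_mk' {H H' : Type*} [Group H] [Group H'] {N : Subgroup H}
    [N.Normal] (Φ : H →* H') (Θ : H' →* H ⧸ N) (hΘ : Θ.comp Φ = QuotientGroup.mk' N)
    (hN : N ≤ Φ.ker) : Φ.ker = N := by
  refine le_antisymm (fun x hx => ?_) hN
  rw [← QuotientGroup.ker_mk' N, ← hΘ, mem_ker, comp_apply, mem_ker.1 hx, map_one]

theorem ker_induced_eq_normalClosure_general {G : Type*} [Group G] {n : ℕ}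
    (A B : Fin n → Subgroup G) (φ : ∀ i, A i ≃* B i) (K : Subgroup G) (hK : K.Normal)
    (ψ : ∀ i, ((A i).map (QuotientGroup.mk' K) : Subgroup (G ⧸ K)) ≃*
        ((B i).map (QuotientGroup.mk' K) : Subgroup (G ⧸ K)))
    (hψ : ∀ i (a : A i)
        (h : QuotientGroup.mk' K (a : G) ∈ (A i).map (QuotientGroup.mk' K)),
      ((ψ i ⟨QuotientGroup.mk' K (a : G), h⟩ : ((B i).map (QuotientGroup.mk' K))) : G ⧸ K) =
        QuotientGroup.mk' K ((φ i a : G)))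
    (Φ : MultiHNN A B φ →*
      MultiHNN (fun i => (A i).map (QuotientGroup.mk' K))
        (fun i => (B i).map (QuotientGroup.mk' K)) ψ)
    (hΦg : ∀ g : G, Φ (MultiHNN.of A B φ g) =
      MultiHNN.of _ _ ψ (QuotientGroup.mk' K g))
    (hΦt : ∀ i, Φ (MultiHNN.t A B φ i) = MultiHNN.t _ _ ψ i) :
    Φ.ker = Subgroup.normalClosure ((MultiHNN.of A B φ) '' (K : Set G)) := by
  set N := Subgroup.normalClosure ((MultiHNN.of A B φ) '' (K : Set G))
  have hKN : K ≤ ((QuotientGroup.mk' N).comp (MultiHNN.of A B φ)).ker := fun k hk =>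
    (QuotientGroup.eq_one_iff _).2 (Subgroup.subset_normalClosure ⟨k, hk, rfl⟩)
  let Θ : MultiHNN _ _ ψ →* _ ⧸ N := MultiHNN.lift (QuotientGroup.lift K _ hKN)
    (fun i => (MultiHNN.t A B φ i : _ ⧸ N)) <| by
      rintro i ⟨_, g, hg, rfl⟩
      have hψg := hψ i ⟨g, hg⟩ (Subgroup.mem_map_of_mem _ hg)
      simp only at hψg
      rw [hψg]
      exact congrArg (QuotientGroup.mk' N) (MultiHNN.t_inv_mul_of_mul_t_s2 i ⟨g, hg⟩)
  refine Φ.ker_eq_of_comp_eq_mk' Θ (MultiHNN.hom_ext ?_ fun i => ?_) ?_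
  · ext g
    simp [Θ, hΦg]
  · simp [Θ, hΦt]
  · refine Subgroup.normalClosure_le_normal ?_
    rintro _ ⟨k, hk, rfl⟩
    simp [hΦg, (QuotientGroup.eq_one_iff k).2 hk]

/-- Lemma (kernel of the induced map on HNN extensions). Let `K ⊴ G` be a good normal
subgroup with respect to `H = G*_{φ₁,…,φₙ}`, let `ψᵢ : AᵢK/K ≃ BᵢK/K` be the isomorphisms
induced by the `φᵢ`, let `H_K = (G/K)*_{ψ₁,…,ψₙ}`, and let `Φ : H → H_K` be the homomorphism
determined by `ι(g) ↦ gK` and `tᵢ ↦ t̄ᵢ`. Then `ker Φ = ⟪ι(K)⟫^H`. -/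
theorem ker_induced_eq_normalClosure {G : Type*} [Group G] {n : ℕ}
    (A B : Fin n → Subgroup G) (φ : ∀ i, A i ≃* B i) (K : Subgroup G) (hK : K.Normal)
    (hgood : ∀ i, Subgroup.map ((B i).subtype.comp (φ i).toMonoidHom)
        (K.comap (A i).subtype) = K ⊓ B i)
    (ψ : ∀ i, ((A i).map (QuotientGroup.mk' K) : Subgroup (G ⧸ K)) ≃*
        ((B i).map (QuotientGroup.mk' K) : Subgroup (G ⧸ K)))
    (hψ : ∀ i (a : A i)
        (h : QuotientGroup.mk' K (a : G) ∈ (A i).map (QuotientGroup.mk' K)),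
      ((ψ i ⟨QuotientGroup.mk' K (a : G), h⟩ : ((B i).map (QuotientGroup.mk' K))) : G ⧸ K) =
        QuotientGroup.mk' K ((φ i a : G)))
    (Φ : MultiHNN A B φ →*
      MultiHNN (fun i => (A i).map (QuotientGroup.mk' K))
        (fun i => (B i).map (QuotientGroup.mk' K)) ψ)
    (hΦg : ∀ g : G, Φ (MultiHNN.of A B φ g) =
      MultiHNN.of _ _ ψ (QuotientGroup.mk' K g))
    (hΦt : ∀ i, Φ (MultiHNN.t A B φ i) = MultiHNN.t _ _ ψ i) :
    Φ.ker = Subgroup.normalClosure ((MultiHNN.of A B φ) '' (K : Set G)) :=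
  ker_induced_eq_normalClosure_general A B φ K hK ψ hψ Φ hΦg hΦt
end

section
/- Let G be a group, let A₁,…,Aₙ and B₁,…,Bₙ be subgroups of G with isomorphisms φᵢ : Aᵢ ≃ Bᵢ for 1 ≤ i ≤ n, let H = G*_{φ₁,…,φₙ} be the HNN extension with stable letters t₁,…,tₙ, and let ι : G → H be the canonical homomorphism. Let K be a normal subgroup of G that is good with respect to H, and let H_K = (G/K)*_{φ̄₁,…,φ̄ₙ} be the HNN extension of G/K along the induced isomorphisms φ̄ᵢ : AᵢK/K ≃ BᵢK/K. Then the surjection φ_K : H → H_K induces an isomorphism H/⟪ι(K)⟫^H ≅ H_K, where ⟪ι(K)⟫^H is the normal closure of ι(K) in H. -/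
lemma MultiHNN.relation {G : Type*} [Group G] {ι : Type*} (A B : ι → Subgroup G)
    (φ : ∀ i, A i ≃* B i) (i : ι) (a : A i) :
    (MultiHNN.t A B φ i)⁻¹ * MultiHNN.of A B φ (a : G) * MultiHNN.t A B φ i =
      MultiHNN.of A B φ ((φ i a : G)) := by
  have hmem : (Monoid.Coprod.inr (FreeGroup.of i) : Monoid.Coprod G (FreeGroup ι))⁻¹ *
      Monoid.Coprod.inl (a : G) * Monoid.Coprod.inr (FreeGroup.of i) *
      (Monoid.Coprod.inl ((φ i a : G)) : Monoid.Coprod G (FreeGroup ι))⁻¹ ∈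
      Subgroup.normalClosure (MultiHNNRels A B φ) :=
    Subgroup.subset_normalClosure (Set.mem_iUnion.2 ⟨i, ⟨a, rfl⟩⟩)
  have h1 : QuotientGroup.mk' (Subgroup.normalClosure (MultiHNNRels A B φ))
      ((Monoid.Coprod.inr (FreeGroup.of i) : Monoid.Coprod G (FreeGroup ι))⁻¹ *
      Monoid.Coprod.inl (a : G) * Monoid.Coprod.inr (FreeGroup.of i) *
      (Monoid.Coprod.inl ((φ i a : G)) : Monoid.Coprod G (FreeGroup ι))⁻¹) = 1 :=
    (QuotientGroup.eq_one_iff _).2 hmem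
  rw [map_mul, map_mul, map_mul, map_inv, map_inv] at h1
  exact mul_inv_eq_one.mp h1

/-- Corollary: with `K ⊴ G` good with respect to `H = G*_{φ₁,…,φₙ}`, the surjection
`Φ = φ_K : H → H_K = (G/K)*_{ψ₁,…,ψₙ}` induces an isomorphism `H/⟪ι(K)⟫^H ≅ H_K`. -/
theorem quotient_normalClosure_iso_inducedHNN {G : Type*} [Group G] {n : ℕ}
    (A B : Fin n → Subgroup G) (φ : ∀ i, A i ≃* B i) (K : Subgroup G) (hK : K.Normal)
    (hgood : ∀ i, Subgroup.map ((B i).subtype.comp (φ i).toMonoidHom)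
        (K.comap (A i).subtype) = K ⊓ B i)
    (ψ : ∀ i, ((A i).map (QuotientGroup.mk' K) : Subgroup (G ⧸ K)) ≃*
        ((B i).map (QuotientGroup.mk' K) : Subgroup (G ⧸ K)))
    (hψ : ∀ i (a : A i)
        (h : QuotientGroup.mk' K (a : G) ∈ (A i).map (QuotientGroup.mk' K)),
      ((ψ i ⟨QuotientGroup.mk' K (a : G), h⟩ : ((B i).map (QuotientGroup.mk' K))) : G ⧸ K) =
        QuotientGroup.mk' K ((φ i a : G)))
    (Φ : MultiHNN A B φ →*
      MultiHNN (fun i => (A i).map (QuotientGroup.mk' K))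
        (fun i => (B i).map (QuotientGroup.mk' K)) ψ)
    (hΦg : ∀ g : G, Φ (MultiHNN.of A B φ g) =
      MultiHNN.of _ _ ψ (QuotientGroup.mk' K g))
    (hΦt : ∀ i, Φ (MultiHNN.t A B φ i) = MultiHNN.t _ _ ψ i) :
    ∃ e : (MultiHNN A B φ ⧸
        Subgroup.normalClosure ((MultiHNN.of A B φ) '' (K : Set G))) ≃*
      MultiHNN (fun i => (A i).map (QuotientGroup.mk' K))
        (fun i => (B i).map (QuotientGroup.mk' K)) ψ,
      ∀ x : MultiHNN A B φ, e (QuotientGroup.mk x) = Φ x := by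
  classical
  -- Notation
  set HR := Subgroup.normalClosure (MultiHNNRels (fun i => (A i).map (QuotientGroup.mk' K))
    (fun i => (B i).map (QuotientGroup.mk' K)) ψ) with hHR
  set N := Subgroup.normalClosure ((MultiHNN.of A B φ) '' (K : Set G)) with hNdef
  -- `Φ` kills `N`, giving `Φbar` on the quotient
  have hker : N ≤ Φ.ker := by
    apply Subgroup.normalClosure_le_normal
    rintro _ ⟨k, hk, rfl⟩
    rw [SetLike.mem_coe, MonoidHom.mem_ker, hΦg]
    have h1 : (QuotientGroup.mk' K) k = 1 := (QuotientGroup.eq_one_iff k).2 hk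
    rw [h1, map_one]
  let Φbar := QuotientGroup.lift N Φ hker
  -- The inverse map
  let f₁ : G ⧸ K →* (MultiHNN A B φ ⧸ N) :=
    QuotientGroup.lift K ((QuotientGroup.mk' N).comp (MultiHNN.of A B φ))
      (fun k hk => (QuotientGroup.eq_one_iff _).2
        (Subgroup.subset_normalClosure ⟨k, hk, rfl⟩))
  let f₂ : FreeGroup (Fin n) →* (MultiHNN A B φ ⧸ N) :=
    FreeGroup.lift fun i => (QuotientGroup.mk' N) (MultiHNN.t A B φ i)
  let f := Monoid.Coprod.lift f₁ f₂
  have hker2 : HR ≤ f.ker := by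
    apply Subgroup.normalClosure_le_normal
    rintro r hr
    rw [MultiHNNRels, Set.mem_iUnion] at hr
    obtain ⟨i, a, rfl⟩ := hr
    obtain ⟨g, hg, hga⟩ := a.2
    rw [SetLike.mem_coe, MonoidHom.mem_ker]
    have ha : (a : G ⧸ K) = QuotientGroup.mk' K g := hga.symm
    have hmem' : QuotientGroup.mk' K ((⟨g, hg⟩ : A i) : G) ∈
        (A i).map (QuotientGroup.mk' K) := ⟨g, hg, rfl⟩
    have haeq : a = ⟨QuotientGroup.mk' K ((⟨g, hg⟩ : A i) : G), hmem'⟩ := Subtype.ext ha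
    have hpsi := hψ i ⟨g, hg⟩ hmem'
    have hf1a : f₁ (a : G ⧸ K) = QuotientGroup.mk' N (MultiHNN.of A B φ g) := by
      rw [ha]; rfl
    have hf1b : f₁ ((ψ i a : _) : G ⧸ K) =
        QuotientGroup.mk' N (MultiHNN.of A B φ ((φ i ⟨g, hg⟩ : B i) : G)) := by
      rw [haeq, hpsi]; rfl
    simp only [map_mul, map_inv, f]
    rw [Monoid.Coprod.lift_apply_inl, Monoid.Coprod.lift_apply_inl,
      Monoid.Coprod.lift_apply_inr, hf1a, hf1b]
    have hrel := MultiHNN.relation A B φ i ⟨g, hg⟩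
    have hf2 : f₂ (FreeGroup.of i) = QuotientGroup.mk' N (MultiHNN.t A B φ i) :=
      FreeGroup.lift_apply_of
    rw [show ((⟨g, hg⟩ : A i) : G) = g from rfl] at hrel
    have h2 : (MultiHNN.t A B φ i)⁻¹ * MultiHNN.of A B φ g * MultiHNN.t A B φ i *
        (MultiHNN.of A B φ ((φ i ⟨g, hg⟩ : B i) : G))⁻¹ = 1 := by
      rw [hrel, mul_inv_cancel]
    have h3 : ((QuotientGroup.mk' N) (MultiHNN.t A B φ i))⁻¹ *
        (QuotientGroup.mk' N) ((MultiHNN.of A B φ) g) *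
        (QuotientGroup.mk' N) (MultiHNN.t A B φ i) *
        ((QuotientGroup.mk' N) ((MultiHNN.of A B φ) ((φ i ⟨g, hg⟩ : B i) : G)))⁻¹ =
        (QuotientGroup.mk' N) ((MultiHNN.t A B φ i)⁻¹ * MultiHNN.of A B φ g *
          MultiHNN.t A B φ i * (MultiHNN.of A B φ ((φ i ⟨g, hg⟩ : B i) : G))⁻¹) := by
      simp only [map_mul, map_inv]
    rw [hf2, h3, h2, map_one]
  let Ψ : MultiHNN (fun i => (A i).map (QuotientGroup.mk' K))
      (fun i => (B i).map (QuotientGroup.mk' K)) ψ →* (MultiHNN A B φ ⧸ N) :=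
    QuotientGroup.lift HR f hker2
  -- The composites are the identity
  have hΨΦ : Ψ.comp Φbar = MonoidHom.id _ := by
    apply QuotientGroup.monoidHom_ext
    apply QuotientGroup.monoidHom_ext
    apply Monoid.Coprod.hom_ext
    · ext g
      show Ψ (Φ (MultiHNN.of A B φ g)) = QuotientGroup.mk' N (MultiHNN.of A B φ g)
      rw [hΦg]
      show f (Monoid.Coprod.inl (QuotientGroup.mk' K g)) = _
      rw [Monoid.Coprod.lift_apply_inl]
      rfl
    · apply FreeGroup.ext_hom
      intro i
      show Ψ (Φ (MultiHNN.t A B φ i)) = QuotientGroup.mk' N (MultiHNN.t A B φ i)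
      rw [hΦt]
      show f (Monoid.Coprod.inr (FreeGroup.of i)) = _
      rw [Monoid.Coprod.lift_apply_inr]
      exact FreeGroup.lift_apply_of
  have hΦΨ : Φbar.comp Ψ = MonoidHom.id _ := by
    apply QuotientGroup.monoidHom_ext
    apply Monoid.Coprod.hom_ext
    · apply QuotientGroup.monoidHom_ext
      ext g
      show Φbar (Ψ (MultiHNN.of _ _ ψ (QuotientGroup.mk' K g))) =
        MultiHNN.of _ _ ψ (QuotientGroup.mk' K g)
      have h1 : Ψ (MultiHNN.of _ _ ψ (QuotientGroup.mk' K g)) =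
          QuotientGroup.mk' N (MultiHNN.of A B φ g) := by
        show f (Monoid.Coprod.inl (QuotientGroup.mk' K g)) = _
        rw [Monoid.Coprod.lift_apply_inl]
        rfl
      rw [h1]
      show Φ (MultiHNN.of A B φ g) = _
      rw [hΦg]
    · apply FreeGroup.ext_hom
      intro i
      show Φbar (Ψ (MultiHNN.t _ _ ψ i)) = MultiHNN.t _ _ ψ i
      have h1 : Ψ (MultiHNN.t _ _ ψ i) = QuotientGroup.mk' N (MultiHNN.t A B φ i) := by
        show f (Monoid.Coprod.inr (FreeGroup.of i)) = _
        rw [Monoid.Coprod.lift_apply_inr]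
        exact FreeGroup.lift_apply_of
      rw [h1]
      show Φ (MultiHNN.t A B φ i) = _
      rw [hΦt]
  exact ⟨MonoidHom.toMulEquiv Φbar Ψ hΨΦ hΦΨ, fun x => rfl⟩
end

section
/- Let C be any group, let D be a torsion-free group, let n ∈ ℕ, let Fₙ be the free group of rank n, and let Z be an infinite cyclic group. Form the free product H₁ = D * (C × Fₙ) * Z, and let ι : C → H₁ be the canonical embedding (C into the factor C × Fₙ into H₁). Then for every m ∈ ℕ: (1) tor_m(H₁) equals the normal closure in H₁ of ι(tor_m(C)); and (2) the preimage under ι of tor_m(H₁) equals tor_m(C). -/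
/-- The ascending chain of normal subgroups `tor₀(G) = 1`,
`tor_{n+1}(G) = ⟪elements of finite order mod tor_n(G)⟫`. -/
def tor (G : Type*) [Group G] : ℕ → Subgroup G
  | 0 => ⊥
  | n + 1 => Subgroup.normalClosure {g : G | ∃ k : ℕ, 0 < k ∧ g ^ k ∈ tor G n}

/-- Index type for the three free factors of `H₁ = D * (C × Fₙ) * Z`. -/
inductive Idx3 | d | c | z

/-- The family of the three free factors `D`, `C × Fₙ` and `Z` (infinite cyclic). -/
def fam (C D : Type u) [Group C] [Group D] (n : ℕ) : Idx3 → Type u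
  | .d => D
  | .c => C × FreeGroup (Fin n)
  | .z => ULift (Multiplicative ℤ)

instance (C D : Type u) [Group C] [Group D] (n : ℕ) : ∀ i, Group (fam C D n i)
  | .d => inferInstanceAs (Group D)
  | .c => inferInstanceAs (Group (C × FreeGroup (Fin n)))
  | .z => inferInstanceAs (Group (ULift (Multiplicative ℤ)))

/-- The canonical embedding `C → H₁ = D * (C × Fₙ) * Z`, through the factor `C × Fₙ`. -/
def emb (C D : Type u) [Group C] [Group D] (n : ℕ) :
    C →* Monoid.CoprodI (fam C D n) :=
  (Monoid.CoprodI.of (M := fam C D n) (i := .c)).comp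
    (MonoidHom.inl C (FreeGroup (Fin n)))

/-!
An element of finite order in a free product of groups is conjugate into a factor: conjugating by
the last letter shortens a reduced word whose first and last letters lie in the same factor, and
otherwise the powers of the word are again reduced and nonempty. As `D`, `Fₙ` and `Z` are
torsion-free, the torsion of `H₁ = D * (C × Fₙ) * Z` is normally generated by `ι(torsion of C)`.

Replacing `C` by `C/K` for a normal `K ≤ C` gives a surjection `H₁ → D * (C/K × Fₙ) * Z` with
kernel `⟪ι K⟫`. For `K = tor_m C`, by induction this kernel is `tor_m H₁`, so `tor_{m+1} H₁` is the
preimage of the normal closure of the torsion of the target, which pulls back to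
`⟪ι tor_{m+1} C⟫`. The same surjection shows `ι⁻¹⟪ι K⟫ = K`.
-/

open Monoid

namespace Monoid.CoprodI

variable {ι : Type*} {G : ι → Type*} [∀ i, Group (G i)]

theorem NeWord.prod_ne_one {i j : ι} (w : NeWord G i j) : w.prod ≠ 1 := by
  classical
  intro h
  have : w.toWord = Word.empty := Word.equiv.symm.injective h
  exact w.toList_ne_nil (congrArg Word.toList this)

theorem NeWord.exists_prod_eq_pow_succ {i j : ι} (hij : i ≠ j) (w : NeWord G i j) (k : ℕ) :
    ∃ w' : NeWord G i j, w'.prod = w.prod ^ (k + 1) := by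
  induction k with
  | zero => exact ⟨w, (pow_one _).symm⟩
  | succ k ih =>
    obtain ⟨w', hw'⟩ := ih
    exact ⟨w.append hij.symm w', by rw [NeWord.append_prod, hw', ← pow_succ']⟩

theorem NeWord.not_isOfFinOrder_prod {i j : ι} (hij : i ≠ j) (w : NeWord G i j) :
    ¬IsOfFinOrder w.prod := by
  rw [isOfFinOrder_iff_pow_eq_one]
  rintro ⟨_ | k, hk, hpow⟩
  · exact lt_irrefl 0 hk
  obtain ⟨w', hw'⟩ := w.exists_prod_eq_pow_succ hij k
  exact w'.prod_ne_one (hw'.trans hpow)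

theorem Word.not_isOfFinOrder_prod_of_fst_ne (w : Word G) {a b : Σ i, G i}
    (ha : w.toList.head? = some a) (hb : w.toList.getLast? = some b) (hab : a.1 ≠ b.1) :
    ¬IsOfFinOrder w.prod := by
  classical
  have hw : w ≠ Word.empty := by rintro rfl; simp at ha
  obtain ⟨i, j, w', rfl⟩ := NeWord.of_word w hw
  obtain rfl : a = ⟨i, w'.head⟩ := Option.some_injective _ (ha.symm.trans w'.toList_head?)
  obtain rfl : b = ⟨j, w'.last⟩ := Option.some_injective _ (hb.symm.trans w'.toList_getLast?)
  exact w'.not_isOfFinOrder_prod hab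

def Word.ofInfix (w : Word G) {l : List (Σ i, G i)} (h : l <:+: w.toList) : Word G where
  toList := l
  ne_one p hp := w.ne_one p (h.subset hp)
  chain_ne := w.chain_ne.infix h

theorem Word.length_rcons_le [DecidableEq ι] [∀ i, DecidableEq (G i)] {i : ι} (p : Word.Pair G i) :
    (Word.rcons p).toList.length ≤ p.tail.toList.length + 1 := by
  unfold Word.rcons
  split_ifs <;> simp [Word.cons]

theorem Word.exists_isConj_length_lt (w : Word G) {i : ι} {a b : G i} {m : List (Σ i, G i)}
    (hw : w.toList = ⟨i, a⟩ :: (m ++ [⟨i, b⟩])) :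
    ∃ w' : Word G, w'.toList.length < w.toList.length ∧ IsConj w'.prod w.prod := by
  classical
  have hm : m <:+: w.toList := ⟨[⟨i, a⟩], [⟨i, b⟩], by rw [hw]; simp⟩
  set wm := w.ofInfix hm
  have hfst : wm.fstIdx ≠ some i := by
    have := w.chain_ne
    rw [hw, List.isChain_cons] at this
    exact Word.fstIdx_ne_iff.2 fun l hl => this.1 l (by cases m <;> simp_all [wm, Word.ofInfix])
  refine ⟨Word.rcons ⟨b * a, wm, hfst⟩, ?_, isConj_iff.2 ⟨(of b)⁻¹, ?_⟩⟩
  · refine (Word.length_rcons_le _).trans_lt ?_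
    simp [hw, wm, Word.ofInfix]
  · have hprod : w.prod = of a * wm.prod * of b := by
      simp [Word.prod, hw, wm, Word.ofInfix, mul_assoc]
    rw [Word.prod_rcons, hprod, map_mul]
    group

theorem Word.prod_eq_one_or_isConj_of_of_isOfFinOrder (w : Word G)
    (hw : IsOfFinOrder w.prod) :
    w.prod = 1 ∨ ∃ (i : ι) (g : G i), IsConj (of g) w.prod := by
  induction hn : w.toList.length using Nat.strong_induction_on generalizing w with
  | _ n ih =>
    rcases hl : w.toList with _ | ⟨⟨i, a⟩, l⟩
    · exact Or.inl (by simp [Word.prod, hl])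
    rcases l.eq_nil_or_concat' with rfl | ⟨m, ⟨j, b⟩, rfl⟩
    · exact Or.inr ⟨i, a, (show of a = w.prod by simp [Word.prod, hl]) ▸ .refl _⟩
    by_cases hij : i = j
    · subst hij
      obtain ⟨w', hlen, hconj⟩ := w.exists_isConj_length_lt hl
      rcases ih _ (hn ▸ hlen) w' (hconj.symm.isOfFinOrder hw) rfl with h1 | ⟨k, g, hg⟩
      · rw [h1, isConj_one_right] at hconj
        exact Or.inl hconj
      · exact Or.inr ⟨k, g, hg.trans hconj⟩
    · exact absurd hw (w.not_isOfFinOrder_prod_of_fst_ne (a := ⟨i, a⟩) (b := ⟨j, b⟩) (by simp [hl])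
        (by rw [hl, ← List.cons_append, List.getLast?_concat]) hij)

theorem eq_one_or_isConj_of_of_isOfFinOrder {x : CoprodI G} (hx : IsOfFinOrder x) :
    x = 1 ∨ ∃ (i : ι) (g : G i), IsOfFinOrder g ∧ IsConj (of g) x := by
  classical
  rw [← Word.equiv.symm_apply_apply x] at hx ⊢
  refine (Word.prod_eq_one_or_isConj_of_of_isOfFinOrder _ hx).imp_right ?_
  rintro ⟨i, g, hg⟩
  exact ⟨i, g, (of_injective i).isOfFinOrder_iff.1 (hg.symm.isOfFinOrder hx), hg⟩

variable {G' : ι → Type*} [∀ i, Group (G' i)]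

def map (f : ∀ i, G i →* G' i) : CoprodI G →* CoprodI G' :=
  lift fun i => of.comp (f i)

@[simp]
theorem map_of (f : ∀ i, G i →* G' i) {i : ι} (g : G i) : map f (of g) = of (f i g) :=
  lift_of _ _

theorem map_surjective {f : ∀ i, G i →* G' i} (hf : ∀ i, Function.Surjective (f i)) :
    Function.Surjective (map f) := by
  intro x
  induction x using induction_on with
  | one => exact ⟨1, map_one _⟩
  | of i g =>
    obtain ⟨g, rfl⟩ := hf i g
    exact ⟨of g, map_of f g⟩
  | mul x y hx hy =>
    obtain ⟨x, rfl⟩ := hx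
    obtain ⟨y, rfl⟩ := hy
    exact ⟨x * y, map_mul _ x y⟩

theorem ker_map {f : ∀ i, G i →* G' i} (hf : ∀ i, Function.Surjective (f i)) :
    (map f).ker = Subgroup.normalClosure (⋃ i, of '' ((f i).ker : Set (G i))) := by
  set N := Subgroup.normalClosure (⋃ i, of '' ((f i).ker : Set (G i)))
  have hN : ∀ i, ∀ g ∈ (f i).ker, of g ∈ N := fun i g hg =>
    Subgroup.subset_normalClosure (Set.mem_iUnion.2 ⟨i, g, hg, rfl⟩)
  refine le_antisymm (fun x hx => ?_) (Subgroup.normalClosure_le_normal ?_)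
  · let ψ : CoprodI G' →* CoprodI G ⧸ N := lift fun i => (f i).liftOfSurjective (hf i)
      (⟨(QuotientGroup.mk' N).comp of, fun g hg => by
        simpa using hN i g hg⟩ :
        { φ : G i →* CoprodI G ⧸ N // (f i).ker ≤ φ.ker })
    have hψ : ψ.comp (map f) = QuotientGroup.mk' N :=
      ext_hom _ _ fun i => MonoidHom.ext fun g => by simp [ψ]
    rw [← QuotientGroup.eq_one_iff (N := N), ← QuotientGroup.mk'_apply, ← hψ,
      MonoidHom.comp_apply, hx, map_one]
  · simp only [Set.iUnion_subset_iff, Set.image_subset_iff]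
    intro i g hg
    rw [Set.mem_preimage, SetLike.mem_coe, MonoidHom.mem_ker, map_of, MonoidHom.mem_ker.1 hg,
      map_one]

end Monoid.CoprodI

namespace Subgroup

variable {G H : Type*} [Group G] [Group H]

theorem normalClosure_image_normalClosure_s4 (f : G →* H) (s : Set G) :
    normalClosure (f '' normalClosure s) = normalClosure (f '' s) :=
  le_antisymm
    (normalClosure_le_normal (Set.image_subset_iff.2 (comap_normalClosure_image_ge s f)))
    (normalClosure_mono (Set.image_mono subset_normalClosure))

theorem comap_normalClosure_of_surjective {f : G →* H} (hf : Function.Surjective f) {s : Set H}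
    (hs : 1 ∈ s) : (normalClosure s).comap f = normalClosure (f ⁻¹' s) := by
  have hker : f.ker ≤ normalClosure (f ⁻¹' s) := fun x hx =>
    subset_normalClosure (by simpa [Set.mem_preimage, f.mem_ker.1 hx] using hs)
  rw [← comap_map_eq_self hker, map_normalClosure _ _ hf, Set.image_preimage_eq _ hf]

theorem comap_normalClosure_image_eq {C C' : Type*} [Group C] [Group C'] {π : C →* C'}
    {φ : G →* H} {ι : C →* G} {ι' : C' →* H} (hπ : Function.Surjective π)
    (hφ : Function.Surjective φ) (hcomm : φ.comp ι = ι'.comp π)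
    (hker : φ.ker ≤ normalClosure (ι '' π.ker)) (s : Set C') :
    (normalClosure (ι' '' s)).comap φ = normalClosure (ι '' (normalClosure s).comap π) := by
  have hker' : φ.ker ≤ normalClosure (ι '' (normalClosure s).comap π) :=
    hker.trans (normalClosure_mono (Set.image_mono fun c hc => by simp_all))
  rw [← comap_map_eq_self hker', map_normalClosure _ _ hφ, ← Set.image_comp,
    ← MonoidHom.coe_comp, hcomm, MonoidHom.coe_comp, Set.image_comp, coe_comap,
    Set.image_preimage_eq _ hπ, normalClosure_image_normalClosure_s4]

end Subgroup

theorem tor_succ_eq_comap {G Q : Type*} [Group G] [Group Q] {φ : G →* Q}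
    (hφ : Function.Surjective φ) {m : ℕ} (hker : φ.ker = tor G m) :
    tor G (m + 1) = (Subgroup.normalClosure {q : Q | IsOfFinOrder q}).comap φ := by
  rw [Subgroup.comap_normalClosure_of_surjective hφ (s := {q | IsOfFinOrder q})
    IsOfFinOrder.one, tor, ← hker]
  congr 1
  ext g
  simp [isOfFinOrder_iff_pow_eq_one, MonoidHom.mem_ker]

instance tor.normal (G : Type*) [Group G] : ∀ m, (tor G m).Normal
  | 0 => Subgroup.normal_bot
  | _ + 1 => Subgroup.normalClosure_normal

section Fam

variable {C C' : Type u} [Group C] [Group C'] (D : Type u) [Group D] (n : ℕ)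

def fam.map (f : C →* C') : ∀ i, fam C D n i →* fam C' D n i
  | .d => MonoidHom.id D
  | .c => f.prodMap (MonoidHom.id (FreeGroup (Fin n)))
  | .z => MonoidHom.id _

variable {D n}

theorem fam.coprodI_map_comp_emb (f : C →* C') :
    (CoprodI.map (fam.map D n f)).comp (emb C D n) = (emb C' D n).comp f :=
  MonoidHom.ext fun _ => CoprodI.map_of _ _

theorem fam.map_surjective {f : C →* C'} (hf : Function.Surjective f) :
    ∀ i, Function.Surjective (fam.map D n f i)
  | .d => Function.surjective_id
  | .c => hf.prodMap Function.surjective_id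
  | .z => Function.surjective_id

theorem fam.ker_coprodI_map {f : C →* C'} (hf : Function.Surjective f) :
    (CoprodI.map (fam.map D n f)).ker = Subgroup.normalClosure (emb C D n '' f.ker) := by
  rw [CoprodI.ker_map (fam.map_surjective hf)]
  refine le_antisymm (Subgroup.normalClosure_le_normal ?_) (Subgroup.normalClosure_mono ?_)
  · simp only [Set.iUnion_subset_iff, Set.image_subset_iff]
    rintro (_ | _ | _) g hg
    · obtain rfl : g = 1 := hg
      simp
    · obtain ⟨c, x⟩ := g
      obtain ⟨hc, rfl : x = 1⟩ := Prod.ext_iff.1 hg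
      exact Subgroup.subset_normalClosure ⟨c, hc, rfl⟩
    · obtain rfl : g = 1 := hg
      simp
  · rintro _ ⟨c, hc, rfl⟩
    exact Set.mem_iUnion.2 ⟨.c, (c, 1), Prod.ext hc rfl, rfl⟩

theorem emb_injective : Function.Injective (emb C D n) :=
  fun _ _ h => congrArg Prod.fst (CoprodI.of_injective (M := fam C D n) Idx3.c h)

theorem comap_emb_normalClosure (K : Subgroup C) [K.Normal] :
    (Subgroup.normalClosure (emb C D n '' K)).comap (emb C D n) = K := by
  have hker := fam.ker_coprodI_map (D := D) (n := n) (QuotientGroup.mk'_surjective K)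
  rw [QuotientGroup.ker_mk'] at hker
  rw [← hker, MonoidHom.comap_ker, fam.coprodI_map_comp_emb,
    MonoidHom.ker_comp_of_injective _ _ emb_injective, QuotientGroup.ker_mk']

theorem exists_emb_eq_of_isOfFinOrder (hD : ∀ g : D, g ≠ 1 → ¬IsOfFinOrder g) :
    ∀ {i} {g : fam C D n i}, IsOfFinOrder g → ∃ c : C, IsOfFinOrder c ∧ emb C D n c = CoprodI.of g
  | .d, g, hg => by
    obtain rfl : g = 1 := not_not.1 fun h => hD g h hg
    exact ⟨1, .one, (map_one _).trans (map_one _).symm⟩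
  | .c, (c, x), hg => by
    obtain rfl : x = 1 := hg.snd.eq_one'
    exact ⟨c, hg.fst, rfl⟩
  | .z, g, hg => by
    obtain rfl : g = 1 := ULift.ext _ _ <| IsOfFinOrder.eq_one' (G := Multiplicative ℤ) <|
      (MulEquiv.ulift.{0, u} (α := Multiplicative ℤ)).toMonoidHom.isOfFinOrder hg
    exact ⟨1, .one, (map_one _).trans (map_one _).symm⟩

theorem normalClosure_isOfFinOrder_eq_normalClosure_emb (hD : ∀ g : D, g ≠ 1 → ¬IsOfFinOrder g) :
    Subgroup.normalClosure {x : CoprodI (fam C D n) | IsOfFinOrder x} =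
      Subgroup.normalClosure (emb C D n '' {c | IsOfFinOrder c}) := by
  refine le_antisymm (Subgroup.normalClosure_le_normal fun x hx => ?_)
    (Subgroup.normalClosure_mono fun _ ⟨c, hc, hx⟩ => hx ▸ (emb C D n).isOfFinOrder hc)
  obtain rfl | ⟨i, g, hg, hconj⟩ := CoprodI.eq_one_or_isConj_of_of_isOfFinOrder hx
  · exact one_mem _
  obtain ⟨c, hc, hcg⟩ := exists_emb_eq_of_isOfFinOrder hD hg
  obtain ⟨h, rfl⟩ := isConj_iff.1 hconj
  have hgN : CoprodI.of g ∈ Subgroup.normalClosure (emb C D n '' {c | IsOfFinOrder c}) :=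
    Subgroup.subset_normalClosure ⟨c, hc, hcg⟩
  exact Subgroup.normalClosure_normal.conj_mem _ hgN h

end Fam

theorem tor_eq_normalClosure_emb (C D : Type u) [Group C] [Group D]
    (hD : ∀ g : D, g ≠ 1 → ¬IsOfFinOrder g) (n : ℕ) :
    ∀ m, tor (CoprodI (fam C D n)) m = Subgroup.normalClosure (emb C D n '' tor C m)
  | 0 => (Subgroup.normalClosure_eq_bot_iff.2 (by
    rintro _ ⟨c, hc, rfl⟩
    simp [Subgroup.mem_bot.1 hc])).symm
  | m + 1 => by
    let π := QuotientGroup.mk' (tor C m)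
    have hπ : Function.Surjective π := QuotientGroup.mk'_surjective _
    have hker := fam.ker_coprodI_map (D := D) (n := n) hπ
    rw [tor_succ_eq_comap (CoprodI.map_surjective (fam.map_surjective hπ))
        (by rw [hker, QuotientGroup.ker_mk', tor_eq_normalClosure_emb C D hD n m]),
      normalClosure_isOfFinOrder_eq_normalClosure_emb hD,
      Subgroup.comap_normalClosure_image_eq hπ (CoprodI.map_surjective (fam.map_surjective hπ))
        (fam.coprodI_map_comp_emb π) hker.le,
      ← tor_succ_eq_comap hπ (QuotientGroup.ker_mk' _)]

/-- For any group `C`, a torsion-free group `D`, `n ∈ ℕ` and `Z` infinite cyclic, with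
`H₁ = D * (C × Fₙ) * Z` and `ι : C → H₁` the canonical embedding, for every `m`:
`tor_m(H₁) = ⟪ι(tor_m C)⟫^{H₁}` and `ι⁻¹(tor_m H₁) = tor_m C`. -/
theorem tor_coprodI (C D : Type u) [Group C] [Group D]
    (hD : ∀ g : D, g ≠ 1 → ¬IsOfFinOrder g) (n : ℕ) :
    ∀ m : ℕ,
      tor (Monoid.CoprodI (fam C D n)) m =
          Subgroup.normalClosure ((emb C D n) '' (tor C m : Set C)) ∧
        (tor (Monoid.CoprodI (fam C D n)) m).comap (emb C D n) = tor C m := by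
  intro m
  rw [tor_eq_normalClosure_emb C D hD]
  exact ⟨rfl, comap_emb_normalClosure _⟩
end

section
/- Let P = ⟨x₁,…,x_m | r₁,…,rₙ⟩ be a finite presentation in which each relator rᵢ is a freely reduced and cyclically reduced word and the rᵢ are pairwise distinct, and let k ∈ ℕ, k ≥ 1. Define P_t^k = ⟨x₁,…,x_m,t | (r₁t)^k,…,(rₙt)^k, t^k⟩. Then every word in the symmetrised closure of the relator set of P_t^k is freely and cyclically reduced, and the symmetrised presentation (P_t^k)_{sym} satisfies the C'(2/k) small cancellation condition: every piece w that occurs as a subword of some relator r in the symmetrised closure satisfies |w| < (2/k)·|r|. -/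
/-- A word on an alphabet `β`: a list of letters with exponents `±1`. -/
abbrev Word (β : Type*) := List (β × Bool)

/-- The formal inverse of a word. -/
def wordInv {β : Type*} (w : Word β) : Word β :=
  (w.map fun l => (l.1, !l.2)).reverse

/-- A word is freely reduced if it has no subword `x x⁻¹` or `x⁻¹ x`. -/
def Reduced {β : Type*} (w : Word β) : Prop :=
  w.Chain' fun a b => a.1 = b.1 → a.2 = b.2

/-- A word is cyclically reduced if it is freely reduced and its first letter is not the
inverse of its last letter. -/
def CyclicallyReduced {β : Type*} (w : Word β) : Prop :=
  Reduced w ∧ ∀ a ∈ w.getLast?, ∀ b ∈ w.head?, a.1 = b.1 → a.2 = b.2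

/-- `w` is obtained from `v` by a cyclic permutation. -/
def CyclicPerm {β : Type*} (v w : Word β) : Prop :=
  ∃ a b, v = a ++ b ∧ w = b ++ a

/-- The symmetrised closure of a set of words: all cyclic permutations of the words
and of their inverses. -/
def SymClosure {β : Type*} (R : Set (Word β)) : Set (Word β) :=
  {w | ∃ r ∈ R, CyclicPerm r w ∨ CyclicPerm (wordInv r) w}

/-- A piece with respect to a symmetrised set `R`: a nonempty freely reduced word that is
a common initial segment of two distinct elements of `R`. -/
def IsPiece {β : Type*} (R : Set (Word β)) (w : Word β) : Prop :=
  w ≠ [] ∧ Reduced w ∧ ∃ r₁ ∈ R, ∃ r₂ ∈ R, r₁ ≠ r₂ ∧ w <+: r₁ ∧ w <+: r₂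

/-- The `C'(λ)` small cancellation condition for a symmetrised set of words `R`:
any piece `w` occurring as a subword of some `r ∈ R` has `|w| < λ|r|`. -/
def SmallCancellation {β : Type*} (R : Set (Word β)) (lam : ℚ) : Prop :=
  ∀ w, IsPiece R w → ∀ r ∈ R, w <:+: r → (w.length : ℚ) < lam * r.length

/-- The `k`-th power of a word. -/
def powWord {β : Type*} (k : ℕ) (w : Word β) : Word β :=
  (List.replicate k w).flatten

/-- A word on `x₁, …, x_m` viewed as a word on `x₁, …, x_m, t`. -/
def embWord {m : ℕ} (w : Word (Fin m)) : Word (Fin m ⊕ Unit) :=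
  w.map fun l => (Sum.inl l.1, l.2)

/-- The letter `t`. -/
def tLetter (m : ℕ) : (Fin m ⊕ Unit) × Bool := (Sum.inr (), true)

/-- The relator set `{(r₁t)^k, …, (rₙt)^k, t^k}` of the presentation `P_t^k`. -/
def PtkRels (m n k : ℕ) (r : Fin n → Word (Fin m)) : Set (Word (Fin m ⊕ Unit)) :=
  (Set.range fun i => powWord k (embWord (r i) ++ [tLetter m])) ∪ {powWord k [tLetter m]}

/-!
Every relator of `P_t^k` is a power `y^k` of a word `y = r t` in which the generator `t` occurs
exactly once; as `t` separates consecutive copies of the reduced word `r`, `y` is cyclically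
reduced, hence so is every cyclic permutation of `y^k`. The same holds for `y⁻¹`, so the
symmetrised closure consists of cyclic permutations `s` of such powers. Suppose a piece `w` inside
`s` had `|w| ≥ 2|y|`. Then `w` contains two occurrences of `t` at distance exactly `|y|` and none
in between; reading them inside the two distinct relators that `w` begins forces both of these
to have period `|y|` as well. A word of period `|y|` and length `k|y|` is determined by its first
`|y|` letters, so the two relators coincide, a contradiction. Hence `|w| < 2|y| = (2/k)|s|`.
-/

-- `Reduced` and `CyclicallyReduced` are definitionally `FreeGroup.IsReduced` and
-- `FreeGroup.IsCyclicallyReduced`, and `wordInv` is `FreeGroup.invRev`.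
namespace FreeGroup

variable {α : Type*} {L L₁ L₂ : List (α × Bool)}

theorem IsReduced.invRev [DecidableEq α] (h : IsReduced L) : IsReduced (invRev L) :=
  .of_reduce_eq (by rw [reduce_invRev, h.reduce_eq])

theorem isCyclicallyReduced_iff_isReduced_append_self :
    IsCyclicallyReduced L ↔ IsReduced (L ++ L) := by
  rw [IsCyclicallyReduced, IsReduced, IsReduced, List.isChain_append, and_self_left]

theorem IsCyclicallyReduced.invRev [DecidableEq α] (h : IsCyclicallyReduced L) :
    IsCyclicallyReduced (invRev L) := by
  rw [isCyclicallyReduced_iff_isReduced_append_self] at h ⊢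
  simpa [invRev_append] using h.invRev

theorem IsCyclicallyReduced.append_comm (h : IsCyclicallyReduced (L₁ ++ L₂)) :
    IsCyclicallyReduced (L₂ ++ L₁) := by
  obtain rfl | h₁ := eq_or_ne L₁ []
  · simpa using h
  obtain rfl | h₂ := eq_or_ne L₂ []
  · simpa using h
  obtain ⟨hred, hcyc⟩ := h
  rw [IsReduced, List.isChain_append] at hred
  refine ⟨List.isChain_append.2 ⟨hred.2.1, hred.1, ?_⟩, ?_⟩
  · simpa [List.getLast?_append_of_ne_nil _ h₂, List.head?_append_of_ne_nil _ h₁] using hcyc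
  · simpa [List.getLast?_append_of_ne_nil _ h₁, List.head?_append_of_ne_nil _ h₂]
      using hred.2.2

theorem IsCyclicallyReduced.rotate (h : IsCyclicallyReduced L) (n : ℕ) :
    IsCyclicallyReduced (L.rotate n) := by
  rw [List.rotate_eq_drop_append_take_mod]
  rw [← List.take_append_drop (n % L.length) L] at h
  exact h.append_comm

end FreeGroup

theorem Reduced.map_fst {β γ : Type*} {f : β → γ} (hf : Function.Injective f) {w : Word β}
    (h : Reduced w) : Reduced (w.map fun l => (f l.1, l.2)) :=
  (List.isChain_map _).2 (h.imp fun _ _ hab he => hab (hf he))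

theorem cyclicallyReduced_append_singleton {β : Type*} {u : Word β} {c : β × Bool}
    (hu : Reduced u) (hc : c.1 ∉ u.map Prod.fst) : CyclicallyReduced (u ++ [c]) := by
  have hne : ∀ b ∈ u, b.1 ≠ c.1 := fun b hb he => hc (he ▸ List.mem_map_of_mem hb)
  refine ⟨List.isChain_append.2 ⟨hu, List.isChain_singleton c, ?_⟩, ?_⟩
  · intro b hb c' hc' he
    simp only [List.head?_cons, Option.mem_def, Option.some_inj] at hc'
    exact absurd (hc' ▸ he) (hne b (List.mem_of_mem_getLast? hb))
  · intro b hb c' hc' he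
    simp only [List.getLast?_concat, Option.mem_def, Option.some_inj] at hb
    rcases List.mem_append.1 (List.mem_of_mem_head? hc') with hc'u | hc'c
    · exact absurd (hb ▸ he).symm (hne c' hc'u)
    · rw [← hb, List.mem_singleton.1 hc'c]

-- Some `i₀ < p` satisfies the left congruence, and so does `i₀ + p`; comparing their right
-- congruences gives `q ∣ p`. Then `i₀ + q < L` satisfies the right one, hence the left one,
-- which gives `p ∣ q`.
theorem Nat.eq_of_forall_lt_modEq_iff_modEq {L p q a b c d : ℕ} (hp : 0 < p) (hL : 2 * p ≤ L)
    (h : ∀ i < L, (i + a ≡ c [MOD p] ↔ i + b ≡ d [MOD q])) : p = q := by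
  set i₀ := (c + (p - a % p)) % p
  have hi₀ : i₀ < p := Nat.mod_lt _ hp
  have hc : i₀ + a ≡ c [MOD p] :=
    calc i₀ + a ≡ c + (p - a % p) + a % p [MOD p] :=
          (Nat.mod_modEq _ _).add (Nat.mod_modEq a p).symm
      _ = c + p := by have := Nat.mod_lt a hp; omega
      _ ≡ c [MOD p] := Nat.add_modEq_left_iff.2 dvd_rfl
  have hd : i₀ + b ≡ d [MOD q] := (h i₀ (by omega)).1 hc
  have hqp : q ∣ p := by
    have hd' : i₀ + p + b ≡ d [MOD q] := (h (i₀ + p) (by omega)).1 <| by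
      rw [add_right_comm]; exact (Nat.add_modEq_left_iff.2 dvd_rfl).trans hc
    rw [add_right_comm] at hd'
    exact Nat.add_modEq_left_iff.1 (hd'.trans hd.symm)
  have hpq : p ∣ q := by
    have hc' : i₀ + q + a ≡ c [MOD p] :=
      (h (i₀ + q) (by have := Nat.le_of_dvd hp hqp; omega)).2 <| by
        rw [add_right_comm]; exact (Nat.add_modEq_left_iff.2 dvd_rfl).trans hd
    rw [add_right_comm] at hc'
    exact Nat.add_modEq_left_iff.1 (hc'.trans hc.symm)
  exact Nat.dvd_antisymm hpq hqp

theorem List.exists_getElem?_eq_some_iff_of_count_eq_one {α : Type*} [BEq α] [LawfulBEq α]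
    {l : List α} {x : α} (h : l.count x = 1) :
    ∃ τ : ℕ, ∀ j : ℕ, l[j]? = some x ↔ j = τ := by
  have hx : x ∈ l := List.count_pos_iff.1 (by omega)
  obtain ⟨s, t, rfl⟩ := List.append_of_mem hx
  simp only [List.count_append, List.count_cons_self] at h
  have hs : x ∉ s := List.count_eq_zero.1 (by omega)
  have ht : x ∉ t := List.count_eq_zero.1 (by omega)
  refine ⟨s.length, fun j => ⟨fun hj => ?_, by rintro rfl; simp⟩⟩
  rcases lt_trichotomy j s.length with hlt | heq | hgt
  · rw [List.getElem?_append_left hlt] at hj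
    exact absurd (List.mem_of_getElem? hj) hs
  · exact heq
  · obtain ⟨i, rfl⟩ := Nat.exists_eq_add_of_lt hgt
    rw [List.getElem?_append_right (by omega), show s.length + i + 1 - s.length = i + 1 by omega,
      List.getElem?_cons_succ] at hj
    exact absurd (List.mem_of_getElem? hj) ht

section PowWord

variable {β : Type*} {k a b : ℕ} {y z w : Word β}

theorem powWord_succ (k : ℕ) (y : Word β) : powWord (k + 1) y = y ++ powWord k y := by
  simp [powWord, List.replicate_succ]

theorem length_powWord (k : ℕ) (y : Word β) : (powWord k y).length = k * y.length := by
  simp [powWord, List.length_flatten, List.sum_replicate]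

theorem wordInv_powWord (k : ℕ) (y : Word β) :
    wordInv (powWord k y) = powWord k (wordInv y) := by
  simp [powWord, wordInv, List.map_flatten, List.reverse_flatten, List.map_replicate]

theorem getElem?_powWord {i : ℕ} (hi : i < k * y.length) :
    (powWord k y)[i]? = y[i % y.length]? := by
  induction k generalizing i with
  | zero => simp at hi
  | succ k ih =>
    rw [powWord_succ]
    rcases lt_or_ge i y.length with hiy | hiy
    · rw [List.getElem?_append_left hiy, Nat.mod_eq_of_lt hiy]
    · rw [List.getElem?_append_right hiy, ih (by rw [Nat.succ_mul] at hi; omega),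
        ← Nat.mod_eq_sub_mod hiy]

theorem getElem?_rotate_powWord {i : ℕ} (hi : i < k * y.length) :
    ((powWord k y).rotate a)[i]? = y[(i + a) % y.length]? := by
  have hpos : 0 < k * y.length := by omega
  rw [List.getElem?_rotate (by rwa [length_powWord]), length_powWord,
    getElem?_powWord (Nat.mod_lt _ hpos), Nat.mod_mod_of_dvd _ (Dvd.intro_left k rfl)]

theorem getElem?_rotate_powWord_mod {i : ℕ} (hi : i < k * y.length) :
    ((powWord k y).rotate a)[i]? = ((powWord k y).rotate a)[i % y.length]? := by
  have hy : 0 < y.length := Nat.pos_of_mul_pos_left (by omega : 0 < k * y.length)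
  have hk : 1 ≤ k := Nat.pos_of_mul_pos_right (by omega : 0 < k * y.length)
  have him : i % y.length < k * y.length :=
    (Nat.mod_lt _ hy).trans_le (Nat.le_mul_of_pos_left _ hk)
  rw [getElem?_rotate_powWord hi, getElem?_rotate_powWord him, Nat.mod_add_mod]

theorem getElem?_map_fst_rotate_powWord_eq_some_iff {x : β} {τ i : ℕ}
    (hτ : ∀ j : ℕ, (y.map Prod.fst)[j]? = some x ↔ j = τ) (hi : i < k * y.length) :
    (((powWord k y).rotate a).map Prod.fst)[i]? = some x ↔ i + a ≡ τ [MOD y.length] := by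
  obtain ⟨hτy, -⟩ := List.getElem?_eq_some_iff.1 ((hτ τ).2 rfl)
  rw [List.length_map] at hτy
  rw [List.getElem?_map, getElem?_rotate_powWord hi, ← List.getElem?_map, hτ, Nat.ModEq,
    Nat.mod_eq_of_lt hτy]

theorem rotate_powWord_eq_of_isPrefix (hyz : y.length = z.length)
    (hwy : w <+: (powWord k y).rotate a) (hwz : w <+: (powWord k z).rotate b)
    (hlen : y.length ≤ w.length) : (powWord k y).rotate a = (powWord k z).rotate b := by
  refine List.ext_getElem? fun i => ?_
  rcases lt_or_ge i (k * y.length) with hi | hi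
  · have him : i % y.length < w.length := (Nat.mod_lt _ (by nlinarith)).trans_le hlen
    have hi' : i < k * z.length := hyz ▸ hi
    rw [getElem?_rotate_powWord_mod hi, getElem?_rotate_powWord_mod hi', ← hyz,
      List.prefix_iff_getElem?.1 hwy _ him, List.prefix_iff_getElem?.1 hwz _ him]
  · rw [List.getElem?_eq_none (by rwa [List.length_rotate, length_powWord]),
      List.getElem?_eq_none (by rwa [List.length_rotate, length_powWord, ← hyz])]

end PowWord

section MarkedPeriod

variable {β : Type*} [DecidableEq β] {x : β} {k a b : ℕ} {y z w : Word β} {R : Set (Word β)}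

def IsMarkedPeriod (x : β) (y : Word β) : Prop :=
  CyclicallyReduced y ∧ (y.map Prod.fst).count x = 1

theorem IsMarkedPeriod.wordInv (h : IsMarkedPeriod x y) : IsMarkedPeriod x (wordInv y) :=
  ⟨FreeGroup.IsCyclicallyReduced.invRev h.1,
    by simpa [_root_.wordInv, Function.comp_def] using h.2⟩

theorem length_eq_of_isPrefix_rotate_powWord (hy : (y.map Prod.fst).count x = 1)
    (hz : (z.map Prod.fst).count x = 1) (hwy : w <+: (powWord k y).rotate a)
    (hwz : w <+: (powWord k z).rotate b) (hlen : 2 * y.length ≤ w.length) :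
    y.length = z.length := by
  obtain ⟨τ, hτ⟩ := List.exists_getElem?_eq_some_iff_of_count_eq_one hy
  obtain ⟨σ, hσ⟩ := List.exists_getElem?_eq_some_iff_of_count_eq_one hz
  have hy₀ : 0 < y.length := by
    have hx := List.length_pos_of_mem (List.count_pos_iff.1 (hy ▸ Nat.one_pos))
    simpa using hx
  refine Nat.eq_of_forall_lt_modEq_iff_modEq (a := a) (b := b) (c := τ) (d := σ) hy₀ hlen
    fun i hi => ?_
  have hiy : i < k * y.length := by
    have := hwy.length_le; rw [List.length_rotate, length_powWord] at this; omega
  have hiz : i < k * z.length := by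
    have := hwz.length_le; rw [List.length_rotate, length_powWord] at this; omega
  rw [← getElem?_map_fst_rotate_powWord_eq_some_iff hτ hiy,
    ← getElem?_map_fst_rotate_powWord_eq_some_iff hσ hiz, List.getElem?_map, List.getElem?_map,
    List.prefix_iff_getElem?.1 hwy i hi, List.prefix_iff_getElem?.1 hwz i hi]

def rotatedMarkedPowers (x : β) (k : ℕ) : Set (Word β) :=
  {s | ∃ y, IsMarkedPeriod x y ∧ ∃ a, s = (powWord k y).rotate a}

theorem cyclicallyReduced_of_mem_rotatedMarkedPowers {s : Word β}
    (hs : s ∈ rotatedMarkedPowers x k) : CyclicallyReduced s := by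
  obtain ⟨y, hy, a, rfl⟩ := hs
  exact (FreeGroup.IsCyclicallyReduced.flatten_replicate hy.1 k).rotate a

theorem symClosure_subset_rotatedMarkedPowers
    (hR : ∀ v ∈ R, ∃ y, IsMarkedPeriod x y ∧ v = powWord k y) :
    SymClosure R ⊆ rotatedMarkedPowers x k := by
  rintro s ⟨v, hv, ⟨u, u', huu', rfl⟩ | ⟨u, u', huu', rfl⟩⟩ <;>
    obtain ⟨y, hy, rfl⟩ := hR v hv
  · exact ⟨y, hy, u.length, by rw [huu', List.rotate_append_length_eq]⟩
  · exact ⟨wordInv y, hy.wordInv, u.length, by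
      rw [← wordInv_powWord, huu', List.rotate_append_length_eq]⟩

theorem length_lt_of_isPiece_of_isInfix (hR : R ⊆ rotatedMarkedPowers x k) (hw : IsPiece R w)
    (hy : IsMarkedPeriod x y) (hwr : w <:+: (powWord k y).rotate a) :
    w.length < 2 * y.length := by
  by_contra! hlen
  obtain ⟨-, -, r₁, h₁, r₂, h₂, hne, hw₁, hw₂⟩ := hw
  obtain ⟨y₁, hy₁, a₁, rfl⟩ := hR h₁
  obtain ⟨y₂, hy₂, a₂, rfl⟩ := hR h₂
  obtain ⟨u, v, huv⟩ := hwr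
  have hw : w <+: (powWord k y).rotate (a + u.length) := by
    rw [← List.rotate_rotate, ← huv, List.append_assoc, List.rotate_append_length_eq]
    simp
  have e₁ := length_eq_of_isPrefix_rotate_powWord hy.2 hy₁.2 hw hw₁ hlen
  have e₂ := length_eq_of_isPrefix_rotate_powWord hy.2 hy₂.2 hw hw₂ hlen
  exact hne (rotate_powWord_eq_of_isPrefix (e₁.symm.trans e₂) hw₁ hw₂ (by omega))

theorem smallCancellation_of_subset_rotatedMarkedPowers (hR : R ⊆ rotatedMarkedPowers x k) :
    SmallCancellation R (2 / k) := by
  intro w hw r hr hwr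
  obtain ⟨y, hy, a, rfl⟩ := hR hr
  have hlt := length_lt_of_isPiece_of_isInfix hR hw hy hwr
  have hk : (k : ℚ) ≠ 0 := by
    have hwr_le := hwr.length_le
    rw [List.length_rotate, length_powWord] at hwr_le
    have hw_pos := List.length_pos_iff.2 hw.1
    exact Nat.cast_ne_zero.2 (by rintro rfl; omega)
  rw [List.length_rotate, length_powWord, Nat.cast_mul, ← mul_assoc, div_mul_cancel₀ _ hk]
  exact_mod_cast hlt

end MarkedPeriod

theorem isMarkedPeriod_embWord_append_tLetter {m : ℕ} {w : Word (Fin m)} (hw : Reduced w) :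
    IsMarkedPeriod (Sum.inr ()) (embWord w ++ [tLetter m]) := by
  refine ⟨cyclicallyReduced_append_singleton (hw.map_fst Sum.inl_injective) ?_, ?_⟩ <;>
    simp [embWord, tLetter, Function.comp_def, List.count_eq_zero]

theorem exists_isMarkedPeriod_of_mem_ptkRels {m n k : ℕ} {r : Fin n → Word (Fin m)}
    (hred : ∀ i, Reduced (r i)) :
    ∀ v ∈ PtkRels m n k r, ∃ y, IsMarkedPeriod (Sum.inr ()) y ∧ v = powWord k y := by
  rintro v (⟨i, rfl⟩ | rfl)
  · exact ⟨_, isMarkedPeriod_embWord_append_tLetter (hred i), rfl⟩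
  · exact ⟨_, isMarkedPeriod_embWord_append_tLetter (w := []) List.isChain_nil, rfl⟩

theorem ptk_small_cancellation_general {m n k : ℕ} (r : Fin n → Word (Fin m))
    (hred : ∀ i, Reduced (r i)) :
    (∀ s ∈ SymClosure (PtkRels m n k r), Reduced s ∧ CyclicallyReduced s) ∧
      SmallCancellation (SymClosure (PtkRels m n k r)) (2 / (k : ℚ)) := by
  have hsub : SymClosure (PtkRels m n k r) ⊆ rotatedMarkedPowers (Sum.inr ()) k :=
    symClosure_subset_rotatedMarkedPowers (exists_isMarkedPeriod_of_mem_ptkRels hred)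
  refine ⟨fun s hs => ?_, smallCancellation_of_subset_rotatedMarkedPowers hsub⟩
  have hs := cyclicallyReduced_of_mem_rotatedMarkedPowers (hsub hs)
  exact ⟨hs.1, hs⟩

/-- Proposition: if `P = ⟨x₁,…,x_m | r₁,…,rₙ⟩` has all relators freely reduced,
cyclically reduced and distinct, and `k ≥ 1`, then every word in the symmetrised closure
of the relator set of `P_t^k = ⟨x₁,…,x_m,t | (r₁t)^k,…,(rₙt)^k, t^k⟩` is freely and
cyclically reduced, and `(P_t^k)_sym` satisfies the `C'(2/k)` small cancellation
condition. -/
theorem ptk_small_cancellation {m n k : ℕ} (hk : 1 ≤ k) (r : Fin n → Word (Fin m))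
    (hred : ∀ i, Reduced (r i)) (hcyc : ∀ i, CyclicallyReduced (r i))
    (hdist : Function.Injective r) :
    (∀ s ∈ SymClosure (PtkRels m n k r), Reduced s ∧ CyclicallyReduced s) ∧
      SmallCancellation (SymClosure (PtkRels m n k r)) (2 / (k : ℚ)) :=
  ptk_small_cancellation_general r hred
end

section
/- Let P = ⟨x₁,…,x_m | r₁,…,rₙ⟩ be a finite presentation, let k₁,…,kₙ ∈ ℕ with each kᵢ ≥ 1, and let Q = ⟨x₁,…,x_m | r₁^{k₁},…,rₙ^{kₙ}⟩. Then torlen(Q̄) − 1 ≤ torlen(P̄) ≤ torlen(Q̄); precisely, for every m ∈ ℕ: (1) if tor_m(Q̄) = tor_{m+1}(Q̄) then tor_m(P̄) = tor_{m+1}(P̄); and (2) if tor_m(P̄) = tor_{m+1}(P̄) then tor_{m+1}(Q̄) = tor_{m+2}(Q̄). -/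
open Subgroup

section Tor

variable {G H : Type*} [Group G] [Group H]

lemma tor_succ (n : ℕ) :
    tor G (n + 1) = normalClosure {g : G | ∃ k : ℕ, 0 < k ∧ g ^ k ∈ tor G n} := rfl

instance tor_normal : ∀ n, (tor G n).Normal
  | 0 => inferInstanceAs (⊥ : Subgroup G).Normal
  | _ + 1 => normalClosure_normal

lemma mem_tor_succ_of_pow_mem {g : G} {n k : ℕ} (hk : 0 < k) (hg : g ^ k ∈ tor G n) :
    g ∈ tor G (n + 1) :=
  subset_normalClosure ⟨k, hk, hg⟩

lemma tor_mono : Monotone (tor G) :=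
  monotone_nat_of_le_succ fun _ _ hg => mem_tor_succ_of_pow_mem one_pos (by simpa using hg)

lemma tor_eq_tor_succ_iff {j : ℕ} :
    tor G j = tor G (j + 1) ↔ ∀ (g : G) (k : ℕ), 0 < k → g ^ k ∈ tor G j → g ∈ tor G j := by
  refine ⟨fun h g k hk hg => h ▸ mem_tor_succ_of_pow_mem hk hg, fun h => ?_⟩
  refine le_antisymm (tor_mono j.le_succ) (normalClosure_le_normal ?_)
  rintro g ⟨k, hk, hg⟩
  exact h g k hk hg

lemma normalClosure_le_tor_one {s : Set G} (hs : ∀ g ∈ s, IsOfFinOrder g) :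
    normalClosure s ≤ tor G 1 :=
  normalClosure_mono fun g hg => by
    obtain ⟨k, hk, hgk⟩ := isOfFinOrder_iff_pow_eq_one.1 (hs g hg)
    exact ⟨k, hk, hgk⟩

lemma map_tor_le (f : G →* H) : ∀ n, (tor G n).map f ≤ tor H n
  | 0 => by simp [tor]
  | n + 1 => by
    refine (map_normalClosure_le _ f).trans (normalClosure_mono ?_)
    rintro _ ⟨g, ⟨k, hk, hgk⟩, rfl⟩
    exact ⟨k, hk, map_pow f g k ▸ map_tor_le f n ⟨g ^ k, hgk, rfl⟩⟩

lemma comap_tor_le_of_ker_le {f : G →* H} (hf : Function.Surjective f) {i : ℕ}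
    (hker : f.ker ≤ tor G i) : ∀ n, (tor H n).comap f ≤ tor G (n + i)
  | 0 => by simpa [tor] using hker
  | n + 1 => by
    have hpre : normalClosure (f ⁻¹' {h : H | ∃ k : ℕ, 0 < k ∧ h ^ k ∈ tor H n}) ≤
        tor G (n + 1 + i) := by
      refine normalClosure_le_normal ?_
      rintro g ⟨k, hk, hgk⟩
      rw [Nat.add_right_comm]
      exact mem_tor_succ_of_pow_mem hk (comap_tor_le_of_ker_le hf hker n (by simpa using hgk))
    rw [tor_succ, ← Set.image_preimage_eq {h : H | ∃ k : ℕ, 0 < k ∧ h ^ k ∈ tor H n} hf,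
      ← map_normalClosure _ f hf, comap_map_eq]
    exact sup_le hpre (hker.trans (tor_mono (by omega)))

variable {f : G →* H} (hf : Function.Surjective f) (hker : f.ker ≤ tor G 1)
include hf hker

lemma tor_eq_tor_succ_of_surjective {j : ℕ} (hG : tor G j = tor G (j + 1)) :
    tor H j = tor H (j + 1) := by
  refine tor_eq_tor_succ_iff.2 fun h k hk hhk => ?_
  obtain ⟨g, rfl⟩ := hf h
  have hgk : g ^ k ∈ tor G j := hG ▸ comap_tor_le_of_ker_le hf hker j (by simpa using hhk)
  exact map_tor_le f j ⟨g, tor_eq_tor_succ_iff.1 hG g k hk hgk, rfl⟩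

lemma tor_succ_eq_tor_succ_succ_of_surjective {j : ℕ} (hH : tor H j = tor H (j + 1)) :
    tor G (j + 1) = tor G (j + 2) := by
  refine tor_eq_tor_succ_iff.2 fun g k hk hgk => comap_tor_le_of_ker_le hf hker j ?_
  have hfgk : f g ^ k ∈ tor H j := hH ▸ map_pow f g k ▸ map_tor_le f (j + 1) ⟨g ^ k, hgk, rfl⟩
  exact tor_eq_tor_succ_iff.1 hH (f g) k hk hfgk

end Tor

lemma ker_quotientMap_le_tor_one {G : Type*} [Group G] {N : Subgroup G} [N.Normal] {s : Set G}
    (hN : N ≤ normalClosure s) (hs : ∀ g ∈ s, IsOfFinOrder (g : G ⧸ N)) :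
    (QuotientGroup.map N (normalClosure s) (MonoidHom.id G) hN).ker ≤ tor (G ⧸ N) 1 := by
  refine (QuotientGroup.ker_map _ _ _ hN).le.trans <| (map_normalClosure_le s _).trans
    (normalClosure_le_tor_one ?_)
  rintro _ ⟨g, hg, rfl⟩
  exact hs g hg

lemma PresentedGroup.exists_surjective_of_pow_rels {α ι : Type*} (r : ι → FreeGroup α)
    (k : ι → ℕ) (hk : ∀ i, 0 < k i) :
    ∃ π : PresentedGroup (Set.range fun i => r i ^ k i) →* PresentedGroup (Set.range r),
      Function.Surjective π ∧ π.ker ≤ tor _ 1 := by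
  have hNM : normalClosure (Set.range fun i => r i ^ k i) ≤ normalClosure (Set.range r) :=
    normalClosure_le_normal <| Set.range_subset_iff.2 fun i =>
      pow_mem (subset_normalClosure (Set.mem_range_self i)) _
  refine ⟨QuotientGroup.map _ (normalClosure (Set.range r)) (MonoidHom.id _) hNM,
    QuotientGroup.map_surjective_of_surjective _ _ _ QuotientGroup.mk_surjective _,
    ker_quotientMap_le_tor_one hNM ?_⟩
  rintro _ ⟨i, rfl⟩
  exact isOfFinOrder_iff_pow_eq_one.2
    ⟨k i, hk i, (QuotientGroup.eq_one_iff _).2 (subset_normalClosure ⟨i, rfl⟩)⟩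

/-- Remark: for `P = ⟨x₁,…,x_m | r₁,…,rₙ⟩` and `Q = ⟨x₁,…,x_m | r₁^{k₁},…,rₙ^{kₙ}⟩`
with all `kᵢ ≥ 1`, we have `torlen(Q̄) − 1 ≤ torlen(P̄) ≤ torlen(Q̄)`: for every `j`,
if the torsion chain of `Q̄` stabilises at step `j` then so does that of `P̄`, and if the
torsion chain of `P̄` stabilises at step `j` then that of `Q̄` stabilises at step `j+1`. -/
theorem torlen_powers_estimate {m n : ℕ} (r : Fin n → FreeGroup (Fin m))
    (k : Fin n → ℕ) (hk : ∀ i, 1 ≤ k i) :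
    ∀ j : ℕ,
      (tor (PresentedGroup (Set.range fun i => r i ^ k i)) j =
          tor (PresentedGroup (Set.range fun i => r i ^ k i)) (j + 1) →
        tor (PresentedGroup (Set.range r)) j =
          tor (PresentedGroup (Set.range r)) (j + 1)) ∧
      (tor (PresentedGroup (Set.range r)) j =
          tor (PresentedGroup (Set.range r)) (j + 1) →
        tor (PresentedGroup (Set.range fun i => r i ^ k i)) (j + 1) =
          tor (PresentedGroup (Set.range fun i => r i ^ k i)) (j + 2)) := by
  obtain ⟨π, hπ, hker⟩ := PresentedGroup.exists_surjective_of_pow_rels r k hk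
  exact fun j => ⟨tor_eq_tor_succ_of_surjective hπ hker,
    tor_succ_eq_tor_succ_succ_of_surjective hπ hker⟩
end
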